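/- arXiv:1205.1595 — 5 statements merged into one kernel-verified Lean document; each statement's English description precedes it below -/
import Mathlib

section
/- Tensorization (thermal subadditivity) of entropy: for every β ∈ ℝ, S_f(β) ≤ E_{βf}[ Σ_{k=1}^n S_{k,f}(β) ], i.e. the total canonical entropy is at most the thermal average of the sum of the conditional entropies. -/
/-!
Put `g = e^{βf}` and `Ent(g) = E[g ln g] − E[g] ln E[g]`. Then `S_f(β) = Ent(g) / E[g]` and
`S_{k,f}(β) = Ent_k(g) / E_k[g]`; as `S_{k,f}(β)` does not depend on the `k`-th coordinate,
`E[g S_{k,f}(β)] = E[Ent_k(g)]`, and the claim becomes the tensorization inequality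
`Ent(g) ≤ Σ_k E[Ent_k(g)]`.

Let `G_k` be `g` with its first `k` coordinates integrated out, so that `G_0 = g`, `G_n = E[g]`
and `G_{k+1} = E_k[G_k]`. Telescoping gives `Ent(g) = Σ_k E[g ln (G_k / G_{k+1})]`, and since
`G_{k+1}` does not depend on the `k`-th coordinate, the `k`-th term is
`E[E_k[g ln (G_k / E_k[G_k])]] ≤ E[Ent_k(g)]` by the entropy duality
`E[g ln (φ / E[φ])] ≤ Ent(g)`. As `f` is bounded, every function in sight lies between two
positive constants, which settles all integrability questions.
-/

open MeasureTheory Real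

section ProductSpace

variable {n : ℕ} {Ω : Fin n → Type*} [∀ k, MeasurableSpace (Ω k)]

/-- Thermal expectation `E_{βf}[g] = E[g e^{βf}] / E[e^{βf}]`. -/
noncomputable def thermalExp {α : Type*} [MeasurableSpace α] (ν : Measure α)
    (β : ℝ) (f g : α → ℝ) : ℝ :=
  (∫ x, g x * Real.exp (β * f x) ∂ν) / ∫ x, Real.exp (β * f x) ∂ν

/-- Canonical entropy `S_f(β) = β E_{βf}[f] − ln Z_{βf}`. -/
noncomputable def canEntropy {α : Type*} [MeasurableSpace α] (ν : Measure α)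
    (f : α → ℝ) (β : ℝ) : ℝ :=
  β * thermalExp ν β f f - Real.log (∫ x, Real.exp (β * f x) ∂ν)

/-- Conditional expectation `E_k[g](x) = ∫ g(x_{y,k}) dμ_k(y)`. -/
noncomputable def condExpK (μ : ∀ k, Measure (Ω k)) (k : Fin n)
    (g : (∀ i, Ω i) → ℝ) (x : ∀ i, Ω i) : ℝ :=
  ∫ y, g (Function.update x k y) ∂(μ k)

/-- Conditional thermal expectation `E_{k,βf}[g](x) = E_k[g e^{βf}](x) / E_k[e^{βf}](x)`. -/
noncomputable def condThermalExpK (μ : ∀ k, Measure (Ω k)) (k : Fin n) (β : ℝ)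
    (f g : (∀ i, Ω i) → ℝ) (x : ∀ i, Ω i) : ℝ :=
  (∫ y, g (Function.update x k y) * Real.exp (β * f (Function.update x k y)) ∂(μ k)) /
    ∫ y, Real.exp (β * f (Function.update x k y)) ∂(μ k)

/-- Conditional entropy `S_{k,f}(β)(x) = β E_{k,βf}[f](x) − ln Z_{k,βf}(x)`. -/
noncomputable def condEntropyK (μ : ∀ k, Measure (Ω k)) (k : Fin n)
    (f : (∀ i, Ω i) → ℝ) (β : ℝ) (x : ∀ i, Ω i) : ℝ :=
  β * condThermalExpK μ k β f f x -
    Real.log (∫ y, Real.exp (β * f (Function.update x k y)) ∂(μ k))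

/-- Conditional variance `σ²_k[g](x) = E_k[(g − E_k[g])²](x)`. -/
noncomputable def condVarK (μ : ∀ k, Measure (Ω k)) (k : Fin n)
    (g : (∀ i, Ω i) → ℝ) (x : ∀ i, Ω i) : ℝ :=
  ∫ y, (g (Function.update x k y) - condExpK μ k g x) ^ 2 ∂(μ k)

/-- Conditional supremum `(sup_k g)(x) = sup_{y} g(x_{y,k})`. -/
noncomputable def condSupK (k : Fin n) (g : (∀ i, Ω i) → ℝ) (x : ∀ i, Ω i) : ℝ :=
  ⨆ y : Ω k, g (Function.update x k y)

/-- Conditional infimum `(inf_k g)(x) = inf_{y} g(x_{y,k})`. -/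
noncomputable def condInfK (k : Fin n) (g : (∀ i, Ω i) → ℝ) (x : ∀ i, Ω i) : ℝ :=
  ⨅ y : Ω k, g (Function.update x k y)

/-- Worst-case variance proxy `Dg = Σ_k (g − inf_k g)²`. -/
noncomputable def Dproxy (g : (∀ i, Ω i) → ℝ) (x : ∀ i, Ω i) : ℝ :=
  ∑ k, (g x - condInfK k g x) ^ 2

end ProductSpace


open Set Function

section Entropy

variable {α : Type*} [MeasurableSpace α] {ν : Measure α}

noncomputable def ent (ν : Measure α) (g : α → ℝ) : ℝ :=
  ∫ x, g x * log (g x) ∂ν - (∫ x, g x ∂ν) * log (∫ x, g x ∂ν)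

theorem canEntropy_eq_ent_div (ν : Measure α) (f : α → ℝ) (β : ℝ) :
    canEntropy ν f β = ent ν (fun x => exp (β * f x)) / ∫ x, exp (β * f x) ∂ν := by
  have hlog : ∫ x, exp (β * f x) * log (exp (β * f x)) ∂ν = β * ∫ x, f x * exp (β * f x) ∂ν := by
    rw [← integral_const_mul]
    congr 1 with x
    rw [log_exp]
    ring
  rw [canEntropy, thermalExp, ent, hlog]
  rcases eq_or_ne (∫ x, exp (β * f x) ∂ν) 0 with hZ | hZ
  · simp [hZ]
  · field_simp

theorem mul_log_le_mul_log_sub_add {a u : ℝ} (ha : 0 < a) (hu : 0 < u) :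
    a * log u ≤ a * log a - a + u := by
  have h := mul_le_mul_of_nonneg_left (log_le_sub_one_of_pos (div_pos hu ha)) ha.le
  rw [log_div hu.ne' ha.ne', mul_sub, mul_sub, mul_div_cancel₀ _ ha.ne'] at h
  linarith

theorem integral_mul_log_sub_log_integral_le_ent [IsProbabilityMeasure ν] {g φ : α → ℝ}
    (hg_pos : ∀ x, 0 < g x) (hφ_pos : ∀ x, 0 < φ x) (hg : Integrable g ν) (hφ : Integrable φ ν)
    (hg_log : Integrable (fun x => g x * log (g x)) ν)
    (hgφ_log : Integrable (fun x => g x * log (φ x)) ν) :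
    ∫ x, g x * (log (φ x) - log (∫ y, φ y ∂ν)) ∂ν ≤ ent ν g := by
  set Z := ∫ y, g y ∂ν
  set W := ∫ y, φ y ∂ν
  have hZ : 0 < Z := by
    rw [integral_pos_iff_support_of_nonneg (fun x => (hg_pos x).le) hg]
    simp [support_eq_univ fun x => (hg_pos x).ne']
  have hW : 0 < W := by
    rw [integral_pos_iff_support_of_nonneg (fun x => (hφ_pos x).le) hφ]
    simp [support_eq_univ fun x => (hφ_pos x).ne']
  -- Young's inequality `a ln u ≤ a ln a − a + u` at `a = g x`, `u = Z φ x / W`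
  have young : ∀ x, g x * log (φ x) - g x * log W
      ≤ g x * log (g x) - log Z * g x - g x + Z / W * φ x := by
    intro x
    have h := mul_log_le_mul_log_sub_add (hg_pos x) (mul_pos (div_pos hZ hW) (hφ_pos x))
    rw [log_mul (div_pos hZ hW).ne' (hφ_pos x).ne', log_div hZ.ne' hW.ne'] at h
    linarith
  have hI₁ : Integrable (fun x => g x * log (g x) - log Z * g x) ν := hg_log.sub (hg.const_mul _)
  have hI : Integrable (fun x => g x * log (g x) - log Z * g x - g x) ν := hI₁.sub hg
  simp_rw [mul_sub]
  calc ∫ x, (g x * log (φ x) - g x * log W) ∂ν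
      ≤ ∫ x, (g x * log (g x) - log Z * g x - g x + Z / W * φ x) ∂ν :=
        integral_mono (hgφ_log.sub (hg.mul_const _)) (hI.add (hφ.const_mul _)) young
    _ = ∫ x, g x * log (g x) ∂ν - log Z * Z - Z + Z / W * W := by
        rw [integral_add hI (hφ.const_mul _), integral_sub hI₁ hg,
          integral_sub hg_log (hg.const_mul _), integral_const_mul, integral_const_mul]
    _ = ent ν g := by
        rw [ent, div_mul_cancel₀ _ hW.ne']
        ring

theorem abs_log_le_of_mem_Icc {t c : ℝ} (ht : t ∈ Icc (exp (-c)) (exp c)) : |log t| ≤ c := by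
  have h₀ : 0 < t := (exp_pos _).trans_le ht.1
  rw [abs_le]
  constructor
  · simpa using log_le_log (exp_pos _) ht.1
  · simpa using log_le_log h₀ ht.2

theorem abs_le_of_mem_Icc_exp {t c : ℝ} (ht : t ∈ Icc (exp (-c)) (exp c)) : |t| ≤ exp c :=
  (abs_of_pos ((exp_pos _).trans_le ht.1)).trans_le ht.2

theorem abs_mul_log_le_of_mem_Icc {s t c : ℝ} (hs : s ∈ Icc (exp (-c)) (exp c))
    (ht : t ∈ Icc (exp (-c)) (exp c)) : |s * log t| ≤ exp c * c := by
  rw [abs_mul]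
  exact mul_le_mul (abs_le_of_mem_Icc_exp hs) (abs_log_le_of_mem_Icc ht) (abs_nonneg _)
    (exp_pos _).le

theorem integrable_of_abs_le [IsFiniteMeasure ν] {h : α → ℝ} (hh : Measurable h) {C : ℝ}
    (hC : ∀ x, |h x| ≤ C) : Integrable h ν :=
  .of_bound hh.aestronglyMeasurable C (ae_of_all _ hC)

theorem integral_mem_Icc [IsProbabilityMeasure ν] {h : α → ℝ} (hh : Measurable h) {a b : ℝ}
    (hab : ∀ x, h x ∈ Icc a b) : ∫ x, h x ∂ν ∈ Icc a b := by
  have hint : Integrable h ν := integrable_of_abs_le hh (C := max |a| |b|) fun x =>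
    abs_le_max_abs_abs (hab x).1 (hab x).2
  constructor
  · simpa using integral_mono (integrable_const a) hint fun x => (hab x).1
  · simpa using integral_mono hint (integrable_const b) fun x => (hab x).2

theorem abs_ent_le [IsProbabilityMeasure ν] {g : α → ℝ} (hg : Measurable g) {c : ℝ}
    (hgc : ∀ x, g x ∈ Icc (exp (-c)) (exp c)) : |ent ν g| ≤ 2 * (exp c * c) := by
  have h₁ : |∫ x, g x * log (g x) ∂ν| ≤ exp c * c := by
    simpa using norm_integral_le_of_norm_le_const (μ := ν) (ae_of_all _ fun x =>
      (Real.norm_eq_abs _).trans_le (abs_mul_log_le_of_mem_Icc (hgc x) (hgc x)))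
  have hZ := integral_mem_Icc (ν := ν) hg hgc
  have h₂ := abs_mul_log_le_of_mem_Icc hZ hZ
  rw [ent]
  linarith [abs_sub (∫ x, g x * log (g x) ∂ν) ((∫ x, g x ∂ν) * log (∫ x, g x ∂ν))]

theorem exp_mul_mem_Icc {t C : ℝ} (ht : |t| ≤ C) (β : ℝ) :
    exp (β * t) ∈ Icc (exp (-(|β| * C))) (exp (|β| * C)) := by
  have h : |β * t| ≤ |β| * C := by
    rw [abs_mul]
    exact mul_le_mul_of_nonneg_left ht (abs_nonneg β)
  exact ⟨exp_le_exp.2 (neg_le_of_abs_le h), exp_le_exp.2 (le_of_abs_le h)⟩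

theorem abs_canEntropy_le [IsProbabilityMeasure ν] {f : α → ℝ} (hf : Measurable f) {C : ℝ}
    (hC : ∀ x, |f x| ≤ C) (β : ℝ) : |canEntropy ν f β| ≤ 2 * (|β| * C) := by
  have he : Measurable fun x => exp (β * f x) := by fun_prop
  have hZ := integral_mem_Icc (ν := ν) he fun x => exp_mul_mem_Icc (hC x) β
  have hZ₀ : 0 < ∫ x, exp (β * f x) ∂ν := (exp_pos _).trans_le hZ.1
  have hN : |∫ x, f x * exp (β * f x) ∂ν| ≤ C * ∫ x, exp (β * f x) ∂ν := by
    rw [← Real.norm_eq_abs, ← integral_const_mul]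
    refine norm_integral_le_of_norm_le ((integrable_of_abs_le (ν := ν) he fun x =>
      abs_le_of_mem_Icc_exp (exp_mul_mem_Icc (hC x) β)).const_mul C) (ae_of_all _ fun x => ?_)
    rw [Real.norm_eq_abs, abs_mul, abs_of_pos (exp_pos _)]
    exact mul_le_mul_of_nonneg_right (hC x) (exp_pos _).le
  have hT : |β * thermalExp ν β f f| ≤ |β| * C := by
    rw [thermalExp, abs_mul, abs_div, abs_of_pos hZ₀]
    exact mul_le_mul_of_nonneg_left ((div_le_iff₀ hZ₀).2 hN) (abs_nonneg β)
  rw [canEntropy]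
  linarith [abs_sub (β * thermalExp ν β f f) (log (∫ x, exp (β * f x) ∂ν)),
    abs_log_le_of_mem_Icc hZ]

end Entropy

section Update

variable {ι : Type*} [DecidableEq ι] {Ω : ι → Type*} [∀ i, MeasurableSpace (Ω i)]
  (μ : ∀ i, Measure (Ω i))

theorem measurable_integral_update [∀ i, SFinite (μ i)] {φ : (∀ i, Ω i) → ℝ} (hφ : Measurable φ)
    (k : ι) : Measurable fun x => ∫ y, φ (update x k y) ∂μ k :=
  (hφ.comp measurable_update').stronglyMeasurable.integral_prod_right'.measurable

theorem measurable_ent_update [∀ i, SFinite (μ i)] {g : (∀ i, Ω i) → ℝ} (hg : Measurable g)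
    (k : ι) : Measurable fun x => ent (μ k) fun y => g (update x k y) := by
  have h₁ := measurable_integral_update μ (hg.mul (measurable_log.comp hg)) k
  have h₂ := measurable_integral_update μ hg k
  exact h₁.sub (h₂.mul (measurable_log.comp h₂))

variable [Fintype ι] [∀ i, IsProbabilityMeasure (μ i)]

theorem measurePreserving_update (k : ι) :
    MeasurePreserving (fun p : (∀ i, Ω i) × Ω k => update p.1 k p.2)
      ((Measure.pi μ).prod (μ k)) (Measure.pi μ) := by
  refine ⟨measurable_update', (Measure.pi_eq fun s hs => ?_).symm⟩
  have hpre : (fun p : (∀ i, Ω i) × Ω k => update p.1 k p.2) ⁻¹' univ.pi s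
      = univ.pi (update s k univ) ×ˢ s k := by
    ext ⟨x, y⟩
    simp only [mem_preimage, mem_pi, mem_univ, true_implies, mem_prod]
    constructor
    · intro h
      refine ⟨fun i => ?_, by simpa using h k⟩
      rcases eq_or_ne i k with rfl | hi
      · simp
      · simpa [hi] using h i
    · rintro ⟨h, hk⟩ i
      rcases eq_or_ne i k with rfl | hi
      · simpa using hk
      · simpa [hi] using h i
  rw [Measure.map_apply measurable_update' (.univ_pi hs), hpre, Measure.prod_prod, Measure.pi_pi]
  simp_rw [apply_update (fun i => μ i) s k univ]
  rw [Finset.prod_update_of_mem (Finset.mem_univ k), measure_univ, one_mul,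
    Finset.sdiff_singleton_eq_erase, Finset.prod_erase_mul _ _ (Finset.mem_univ k)]

theorem integral_comp_update {φ : (∀ i, Ω i) → ℝ} (hφ : AEStronglyMeasurable φ (Measure.pi μ))
    (k : ι) :
    ∫ p, φ (update p.1 k p.2) ∂(Measure.pi μ).prod (μ k) = ∫ x, φ x ∂Measure.pi μ := by
  have hmp := measurePreserving_update μ k
  rw [← integral_map hmp.measurable.aemeasurable (by rwa [hmp.map_eq]),
    hmp.map_eq]

theorem integrable_comp_update {φ : (∀ i, Ω i) → ℝ} (hφ : Integrable φ (Measure.pi μ)) (k : ι) :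
    Integrable (fun p : (∀ i, Ω i) × Ω k => φ (update p.1 k p.2)) ((Measure.pi μ).prod (μ k)) :=
  (measurePreserving_update μ k).integrable_comp_of_integrable hφ

theorem integral_integral_update {φ : (∀ i, Ω i) → ℝ} (hφ : Integrable φ (Measure.pi μ)) (k : ι) :
    ∫ x, ∫ y, φ (update x k y) ∂μ k ∂Measure.pi μ = ∫ x, φ x ∂Measure.pi μ := by
  rw [← integral_comp_update μ hφ.aestronglyMeasurable k,
    integral_prod _ (integrable_comp_update μ hφ k)]

theorem integral_integral_update_swap {φ : (∀ i, Ω i) → ℝ} (hφ : Integrable φ (Measure.pi μ))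
    (k : ι) : ∫ y, ∫ x, φ (update x k y) ∂Measure.pi μ ∂μ k = ∫ x, φ x ∂Measure.pi μ := by
  rw [← integral_comp_update μ hφ.aestronglyMeasurable k,
    integral_prod_symm _ (integrable_comp_update μ hφ k)]

theorem integrable_integral_update {φ : (∀ i, Ω i) → ℝ} (hφ : Integrable φ (Measure.pi μ))
    (k : ι) : Integrable (fun x => ∫ y, φ (update x k y) ∂μ k) (Measure.pi μ) :=
  (integrable_comp_update μ hφ k).integral_prod_left

end Update

section PartialAverage

variable {n : ℕ} {Ω : Fin n → Type*} [∀ i, MeasurableSpace (Ω i)] (μ : ∀ i, Measure (Ω i))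

noncomputable def partialAvg (g : (∀ i, Ω i) → ℝ) (k : ℕ) (x : ∀ i, Ω i) : ℝ :=
  ∫ y, g (fun i : Fin n => if (i : ℕ) < k then y i else x i) ∂Measure.pi μ

theorem partialAvg_update (g : (∀ i, Ω i) → ℝ) {k : ℕ} {j : Fin n} (hj : (j : ℕ) < k)
    (x : ∀ i, Ω i) (y : Ω j) : partialAvg μ g k (update x j y) = partialAvg μ g k x := by
  unfold partialAvg
  congr with z
  congr with i
  split_ifs with hi
  · rfl
  · exact update_of_ne (by rintro rfl; exact hi hj) _ _

theorem measurable_merge_lt (k : ℕ) :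
    Measurable fun p : (∀ i, Ω i) × (∀ i, Ω i) =>
      fun i : Fin n => if (i : ℕ) < k then p.2 i else p.1 i :=
  measurable_pi_lambda _ fun i => by
    split_ifs
    exacts [(measurable_pi_apply i).comp measurable_snd,
      (measurable_pi_apply i).comp measurable_fst]

theorem partialAvg_self (g : (∀ i, Ω i) → ℝ) (x : ∀ i, Ω i) :
    partialAvg μ g n x = ∫ y, g y ∂Measure.pi μ := by
  simp [partialAvg]

variable [∀ i, IsProbabilityMeasure (μ i)] {g : (∀ i, Ω i) → ℝ}

theorem partialAvg_zero (g : (∀ i, Ω i) → ℝ) : partialAvg μ g 0 = g := by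
  ext x
  simp [partialAvg]

theorem measurable_partialAvg (hg : Measurable g) (k : ℕ) : Measurable (partialAvg μ g k) :=
  (hg.comp (measurable_merge_lt k)).stronglyMeasurable.integral_prod_right'
    (ν := Measure.pi μ) |>.measurable

theorem partialAvg_mem_Icc (hg : Measurable g) {a b : ℝ} (hab : ∀ x, g x ∈ Icc a b) (k : ℕ)
    (x : ∀ i, Ω i) : partialAvg μ g k x ∈ Icc a b :=
  integral_mem_Icc (hg.comp ((measurable_merge_lt k).comp measurable_prodMk_left)) fun _ => hab _

theorem partialAvg_succ (hg : Measurable g) {C : ℝ} (hC : ∀ x, |g x| ≤ C) (k : Fin n)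
    (x : ∀ i, Ω i) :
    partialAvg μ g (k + 1) x = ∫ z, partialAvg μ g k (update x k z) ∂μ k := by
  have hmerge : ∀ (y : ∀ i, Ω i) (z : Ω k),
      (fun i : Fin n => if (i : ℕ) < k then y i else update x k z i)
        = fun i : Fin n => if (i : ℕ) < k + 1 then update y k z i else x i := by
    intro y z
    funext i
    rcases eq_or_ne i k with rfl | hik
    · simp
    · have hik' : (i : ℕ) ≠ k := Fin.val_ne_of_ne hik
      by_cases hi : (i : ℕ) < k
      · simp [hi, hik, Nat.lt_succ_of_lt hi]
      · simp [hi, hik, show ¬ (i : ℕ) < k + 1 by omega]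
  have hφ : Measurable fun w : (∀ i, Ω i) =>
      g (fun i : Fin n => if (i : ℕ) < k + 1 then w i else x i) :=
    hg.comp ((measurable_merge_lt (k + 1)).comp measurable_prodMk_left)
  simp only [partialAvg, hmerge]
  exact (integral_integral_update_swap μ (integrable_of_abs_le hφ fun _ => hC _) k).symm

end PartialAverage

section Tensorization

variable {n : ℕ} {Ω : Fin n → Type*} [∀ i, MeasurableSpace (Ω i)] (μ : ∀ i, Measure (Ω i))
  [∀ i, IsProbabilityMeasure (μ i)] {g : (∀ i, Ω i) → ℝ} {c : ℝ}

theorem integrable_mul_log_partialAvg_sub (hg : Measurable g)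
    (hgc : ∀ x, g x ∈ Icc (exp (-c)) (exp c)) (k : ℕ) :
    Integrable (fun x => g x * (log (partialAvg μ g k x) - log (partialAvg μ g (k + 1) x)))
      (Measure.pi μ) := by
  have hG := partialAvg_mem_Icc μ hg hgc
  have hGm := measurable_partialAvg μ hg
  refine integrable_of_abs_le (by fun_prop) (C := exp c * c + exp c * c) fun x => ?_
  rw [mul_sub]
  exact (abs_sub _ _).trans (add_le_add (abs_mul_log_le_of_mem_Icc (hgc x) (hG k x))
    (abs_mul_log_le_of_mem_Icc (hgc x) (hG (k + 1) x)))

theorem integral_mul_log_partialAvg_sub_le (hg : Measurable g)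
    (hgc : ∀ x, g x ∈ Icc (exp (-c)) (exp c)) (k : Fin n) :
    ∫ x, g x * (log (partialAvg μ g k x) - log (partialAvg μ g (k + 1) x)) ∂Measure.pi μ
      ≤ ∫ x, ent (μ k) (fun y => g (update x k y)) ∂Measure.pi μ := by
  have hG := partialAvg_mem_Icc μ hg hgc
  have hGm := measurable_partialAvg μ hg
  have hpos : ∀ {t}, t ∈ Icc (exp (-c)) (exp c) → 0 < t := fun ht => (exp_pos _).trans_le ht.1
  have hint := integrable_mul_log_partialAvg_sub μ hg hgc k
  rw [← integral_integral_update μ hint k]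
  refine integral_mono (integrable_integral_update μ hint k)
    (integrable_of_abs_le (measurable_ent_update μ hg k) fun x =>
      abs_ent_le (hg.comp (measurable_update x)) fun _ => hgc _) fun x => ?_
  have hW : ∀ y, partialAvg μ g (k + 1) (update x k y)
      = ∫ z, partialAvg μ g k (update x k z) ∂μ k := fun y => by
    rw [partialAvg_update μ g (Nat.lt_succ_self k) x y,
      partialAvg_succ μ hg (fun x => abs_le_of_mem_Icc_exp (hgc x)) k x]
  simp only [hW]
  have hgk : Measurable fun y => g (update x k y) := hg.comp (measurable_update x)
  have hGk : Measurable fun y => partialAvg μ g k (update x k y) :=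
    (hGm k).comp (measurable_update x)
  exact integral_mul_log_sub_log_integral_le_ent (fun _ => hpos (hgc _)) (fun _ => hpos (hG _ _))
    (integrable_of_abs_le hgk fun _ => abs_le_of_mem_Icc_exp (hgc _))
    (integrable_of_abs_le hGk fun _ => abs_le_of_mem_Icc_exp (hG _ _))
    (integrable_of_abs_le (by fun_prop) fun _ => abs_mul_log_le_of_mem_Icc (hgc _) (hgc _))
    (integrable_of_abs_le (by fun_prop) fun _ => abs_mul_log_le_of_mem_Icc (hgc _) (hG _ _))

theorem ent_pi_le_sum_integral_ent (hg : Measurable g)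
    (hgc : ∀ x, g x ∈ Icc (exp (-c)) (exp c)) :
    ent (Measure.pi μ) g ≤ ∑ k, ∫ x, ent (μ k) (fun y => g (update x k y)) ∂Measure.pi μ := by
  set Z := ∫ x, g x ∂Measure.pi μ
  have htel : ∀ x, g x * (log (g x) - log Z)
      = ∑ k : Fin n, g x * (log (partialAvg μ g k x) - log (partialAvg μ g (k + 1) x)) := by
    intro x
    rw [← Finset.mul_sum, Fin.sum_univ_eq_sum_range
      (fun k => log (partialAvg μ g k x) - log (partialAvg μ g (k + 1) x)),
      Finset.sum_range_sub', partialAvg_zero, partialAvg_self]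
  have hgl : Integrable (fun x => g x * log (g x)) (Measure.pi μ) :=
    integrable_of_abs_le (by fun_prop) fun x => abs_mul_log_le_of_mem_Icc (hgc x) (hgc x)
  have hgi : Integrable g (Measure.pi μ) :=
    integrable_of_abs_le hg fun x => abs_le_of_mem_Icc_exp (hgc x)
  calc ent (Measure.pi μ) g = ∫ x, g x * (log (g x) - log Z) ∂Measure.pi μ := by
        simp_rw [mul_sub]
        rw [integral_sub hgl (hgi.mul_const _), integral_mul_const, ent]
    _ = ∑ k : Fin n, ∫ x, g x * (log (partialAvg μ g k x) - log (partialAvg μ g (k + 1) x))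
          ∂Measure.pi μ := by
        simp_rw [htel]
        exact integral_finsetSum _ fun k _ => integrable_mul_log_partialAvg_sub μ hg hgc k
    _ ≤ _ := Finset.sum_le_sum fun k _ => integral_mul_log_partialAvg_sub_le μ hg hgc k

end Tensorization

section ConditionalEntropy

variable {n : ℕ} {Ω : Fin n → Type*} [∀ i, MeasurableSpace (Ω i)] (μ : ∀ i, Measure (Ω i))

theorem condEntropyK_eq_canEntropy (k : Fin n) (f : (∀ i, Ω i) → ℝ) (β : ℝ) (x : ∀ i, Ω i) :
    condEntropyK μ k f β x = canEntropy (μ k) (fun y => f (update x k y)) β :=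
  rfl

theorem condEntropyK_update (k : Fin n) (f : (∀ i, Ω i) → ℝ) (β : ℝ) (x : ∀ i, Ω i) (y : Ω k) :
    condEntropyK μ k f β (update x k y) = condEntropyK μ k f β x := by
  simp only [condEntropyK, condThermalExpK, update_idem]

theorem measurable_condEntropyK [∀ i, SFinite (μ i)] {f : (∀ i, Ω i) → ℝ} (hf : Measurable f)
    (k : Fin n) (β : ℝ) : Measurable (condEntropyK μ k f β) := by
  have hN := measurable_integral_update μ (φ := fun z => f z * exp (β * f z)) (by fun_prop) k
  have hZ := measurable_integral_update μ (φ := fun z => exp (β * f z)) (by fun_prop) k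
  exact ((hN.div hZ).const_mul β).sub (measurable_log.comp hZ)

variable [∀ i, IsProbabilityMeasure (μ i)] {f : (∀ i, Ω i) → ℝ} {C : ℝ}

theorem integrable_condEntropyK_mul_exp (hf : Measurable f) (hC : ∀ x, |f x| ≤ C) (k : Fin n)
    (β : ℝ) : Integrable (fun x => condEntropyK μ k f β x * exp (β * f x)) (Measure.pi μ) := by
  refine integrable_of_abs_le ((measurable_condEntropyK μ hf k β).mul (by fun_prop))
    (C := 2 * (|β| * C) * exp (|β| * C)) fun x => ?_
  have hS := abs_canEntropy_le (ν := μ k) (hf.comp (measurable_update x)) (fun _ => hC _) β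
  rw [abs_mul]
  exact mul_le_mul hS (abs_le_of_mem_Icc_exp (exp_mul_mem_Icc (hC x) β)) (abs_nonneg _)
    ((abs_nonneg _).trans hS)

theorem integral_condEntropyK_mul_exp (hf : Measurable f) (hC : ∀ x, |f x| ≤ C) (k : Fin n)
    (β : ℝ) :
    ∫ x, condEntropyK μ k f β x * exp (β * f x) ∂Measure.pi μ
      = ∫ x, ent (μ k) (fun y => exp (β * f (update x k y))) ∂Measure.pi μ := by
  rw [← integral_integral_update μ (integrable_condEntropyK_mul_exp μ hf hC k β) k]
  congr with x
  have hZ := integral_mem_Icc (ν := μ k) (h := fun y => exp (β * f (update x k y)))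
    (by fun_prop) fun _ => exp_mul_mem_Icc (hC _) β
  simp only [condEntropyK_update]
  rw [integral_const_mul, condEntropyK_eq_canEntropy, canEntropy_eq_ent_div,
    div_mul_cancel₀ _ ((exp_pos _).trans_le hZ.1).ne']

end ConditionalEntropy

section Statements

variable {n : ℕ} {Ω : Fin n → Type*} [∀ k, MeasurableSpace (Ω k)]

/-- Tensorization (thermal subadditivity) of entropy. -/
theorem stmt_6 (μ : ∀ k, Measure (Ω k)) [∀ k, IsProbabilityMeasure (μ k)]
    (f : (∀ i, Ω i) → ℝ) (hf : Measurable f) (C : ℝ) (hC : ∀ x, |f x| ≤ C) (β : ℝ) :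
    canEntropy (Measure.pi μ) f β
      ≤ thermalExp (Measure.pi μ) β f (fun x => ∑ k, condEntropyK μ k f β x) := by
  rw [canEntropy_eq_ent_div, thermalExp]
  refine div_le_div_of_nonneg_right ?_ (integral_nonneg fun x => (exp_pos _).le)
  calc ent (Measure.pi μ) (fun x => exp (β * f x))
      ≤ ∑ k, ∫ x, ent (μ k) (fun y => exp (β * f (update x k y))) ∂Measure.pi μ :=
        ent_pi_le_sum_integral_ent μ (by fun_prop) fun x => exp_mul_mem_Icc (hC x) β
    _ = ∑ k, ∫ x, condEntropyK μ k f β x * exp (β * f x) ∂Measure.pi μ := by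
        simp_rw [integral_condEntropyK_mul_exp μ hf hC]
    _ = ∫ x, (∑ k, condEntropyK μ k f β x) * exp (β * f x) ∂Measure.pi μ := by
        simp_rw [Finset.sum_mul]
        exact (integral_finsetSum _ fun k _ => integrable_condEntropyK_mul_exp μ hf hC k β).symm

end Statements
end

section
/- Efron–Stein–Steele inequality: the variance of f satisfies σ²[f] ≤ E[ Σ_{k=1}^n σ²_k[f] ], where σ²_k[f] is the conditional variance in the k-th coordinate. -/
open MeasureTheory Real

/-!
Induction on the number of factors. On a product `μ ⊗ ν`,
the law of total variance gives `Var g = ∫ Var_ν g(a, ·) dμ(a) + Var_μ (∫ g(·, b) dν(b))`. Writing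
`∫ g(a, b) dν(b) - E g = ∫ (g(a, b) - ∫ g(a', b) dμ(a')) dν(b)` and applying Jensen's inequality
before integrating in `a` bounds the second term by `∫ Var_μ g(·, b) dν(b)`. This is the
inequality for two factors. For `n + 1` factors, split off the first coordinate: the second term
is then the integrated conditional variance in that coordinate, and the first is bounded by the
induction hypothesis applied to each section.
-/

open ProbabilityTheory

section Bounded

variable {α : Type*} [MeasurableSpace α] {μ : Measure α} {X : α → ℝ} {C : ℝ}

lemma abs_integral_le_of_abs_le [IsProbabilityMeasure μ] (hC : ∀ a, |X a| ≤ C) :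
    |∫ a, X a ∂μ| ≤ C := by
  simpa using norm_integral_le_of_norm_le_const (μ := μ) (f := X) (ae_of_all _ hC)

lemma memLp_of_abs_le [IsFiniteMeasure μ] (hX : Measurable X) (hC : ∀ a, |X a| ≤ C)
    (p : ENNReal) : MemLp X p μ :=
  .of_bound hX.aestronglyMeasurable C (ae_of_all _ hC)

end Bounded

section Variance

variable {α : Type*} [MeasurableSpace α] {μ : Measure α} [IsProbabilityMeasure μ] {X : α → ℝ}

lemma integral_sub_sq_eq_variance_add (hX : MemLp X 2 μ) (c : ℝ) :
    ∫ a, (X a - c) ^ 2 ∂μ = Var[X; μ] + (μ[X] - c) ^ 2 := by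
  have h := variance_eq_sub (hX.sub (memLp_const c))
  rw [show X - (fun _ => c) = fun a => X a - c from rfl,
    variance_sub_const hX.aestronglyMeasurable, integral_sub (hX.integrable one_le_two)
    (integrable_const c)] at h
  simp only [integral_const, probReal_univ, one_smul] at h
  rw [h]
  simp only [Pi.pow_apply]
  ring

lemma sq_integral_le_integral_sq (hX : MemLp X 2 μ) : μ[X] ^ 2 ≤ ∫ a, X a ^ 2 ∂μ := by
  have h := integral_sub_sq_eq_variance_add hX 0
  simp only [sub_zero] at h
  linarith [variance_nonneg X μ]

end Variance

section Prod

variable {α β : Type*} [MeasurableSpace α] [MeasurableSpace β] {μ : Measure α} {ν : Measure β}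
  [IsProbabilityMeasure μ] [IsProbabilityMeasure ν] {g : α × β → ℝ} {C : ℝ}

lemma integrable_variance_prodMk (hg : Measurable g) (hC : ∀ p, |g p| ≤ C) :
    Integrable (fun a => Var[fun b => g (a, b); ν]) μ := by
  have hmeas : Measurable fun a => Var[fun b => g (a, b); ν] := by
    have h : (fun a => Var[fun b => g (a, b); ν])
        = fun a => ∫ b, (g (a, b) - ∫ b', g (a, b') ∂ν) ^ 2 ∂ν :=
      funext fun a => variance_eq_integral (hg.comp measurable_prodMk_left).aemeasurable
    rw [h]
    exact ((hg.sub (hg.stronglyMeasurable.integral_prod_right'.measurable.comp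
      measurable_fst)).pow_const 2).stronglyMeasurable.integral_prod_right'.measurable
  refine .of_bound hmeas.aestronglyMeasurable (C ^ 2) (ae_of_all _ fun a => ?_)
  rw [Real.norm_of_nonneg (variance_nonneg _ _)]
  convert variance_le_sq_of_bounded (μ := ν) (ae_of_all _ fun b => abs_le.mp (hC (a, b)))
    (hg.comp measurable_prodMk_left).aemeasurable using 1
  ring

lemma variance_prod_eq (hg : Measurable g) (hC : ∀ p, |g p| ≤ C) :
    Var[g; μ.prod ν]
      = ∫ a, Var[fun b => g (a, b); ν] ∂μ + Var[fun a => ∫ b, g (a, b) ∂ν; μ] := by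
  set F := fun a => ∫ b, g (a, b) ∂ν
  have hF : Measurable F := hg.stronglyMeasurable.integral_prod_right'.measurable
  have hFLp : MemLp F 2 μ :=
    memLp_of_abs_le hF (fun a => abs_integral_le_of_abs_le fun b => hC (a, b)) 2
  have hgLp : MemLp g 2 (μ.prod ν) := memLp_of_abs_le hg hC 2
  have hE : (μ.prod ν)[g] = μ[F] := integral_prod g (hgLp.integrable one_le_two)
  calc Var[g; μ.prod ν] = ∫ p, (g p - μ[F]) ^ 2 ∂(μ.prod ν) := by
        rw [variance_eq_integral hg.aemeasurable, hE]
    _ = ∫ a, ∫ b, (g (a, b) - μ[F]) ^ 2 ∂ν ∂μ :=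
        integral_prod _ (hgLp.sub (memLp_const _)).integrable_sq
    _ = ∫ a, (Var[fun b => g (a, b); ν] + (F a - μ[F]) ^ 2) ∂μ :=
        integral_congr_ae (ae_of_all _ fun a => integral_sub_sq_eq_variance_add
          (memLp_of_abs_le (hg.comp measurable_prodMk_left) (fun b => hC (a, b)) 2) _)
    _ = _ := by
        have hdev : Integrable (fun a => (F a - μ[F]) ^ 2) μ :=
          (hFLp.sub (memLp_const _)).integrable_sq
        rw [integral_add (integrable_variance_prodMk hg hC) hdev,
          variance_eq_integral hF.aemeasurable]

lemma variance_integral_prodMk_le (hg : Measurable g) (hC : ∀ p, |g p| ≤ C) :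
    Var[fun a => ∫ b, g (a, b) ∂ν; μ] ≤ ∫ b, Var[fun a => g (a, b); μ] ∂ν := by
  set F := fun a => ∫ b, g (a, b) ∂ν
  set M := fun b => ∫ a, g (a, b) ∂μ
  have hF : Measurable F := hg.stronglyMeasurable.integral_prod_right'.measurable
  have hM : Measurable M := hg.stronglyMeasurable.integral_prod_left'.measurable
  have hMLp : MemLp M 2 ν :=
    memLp_of_abs_le hM (fun b => abs_integral_le_of_abs_le fun a => hC (a, b)) 2
  have hgLp : MemLp g 2 (μ.prod ν) := memLp_of_abs_le hg hC 2
  have hsection : ∀ a, MemLp (fun b => g (a, b)) 2 ν := fun a =>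
    memLp_of_abs_le (hg.comp measurable_prodMk_left) (fun b => hC (a, b)) 2
  have hdev : MemLp (fun p : α × β => g p - M p.2) 2 (μ.prod ν) := hgLp.sub (hMLp.comp_snd μ)
  have hmean : μ[F] = ν[M] := (integral_prod g (hgLp.integrable one_le_two)).symm.trans
    (integral_prod_symm g (hgLp.integrable one_le_two))
  have hcentre : ∀ a, F a - μ[F] = ∫ b, (g (a, b) - M b) ∂ν := fun a => by
    rw [integral_sub ((hsection a).integrable one_le_two) (hMLp.integrable one_le_two), hmean]
  calc Var[F; μ] = ∫ a, (∫ b, (g (a, b) - M b) ∂ν) ^ 2 ∂μ := by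
        rw [variance_eq_integral hF.aemeasurable]
        simp_rw [hcentre]
    _ ≤ ∫ a, ∫ b, (g (a, b) - M b) ^ 2 ∂ν ∂μ :=
        integral_mono_of_nonneg (ae_of_all _ fun _ => sq_nonneg _)
          hdev.integrable_sq.integral_prod_left
          (ae_of_all _ fun a => sq_integral_le_integral_sq ((hsection a).sub hMLp))
    _ = ∫ b, ∫ a, (g (a, b) - M b) ^ 2 ∂μ ∂ν := integral_integral_swap hdev.integrable_sq
    _ = ∫ b, Var[fun a => g (a, b); μ] ∂ν := integral_congr_ae (ae_of_all _ fun b =>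
        (variance_eq_integral (hg.comp measurable_prodMk_right).aemeasurable).symm)

lemma variance_prod_le (hg : Measurable g) (hC : ∀ p, |g p| ≤ C) :
    Var[g; μ.prod ν]
      ≤ ∫ a, Var[fun b => g (a, b); ν] ∂μ + ∫ b, Var[fun a => g (a, b); μ] ∂ν :=
  (variance_prod_eq hg hC).trans_le (add_le_add_right (variance_integral_prodMk_le hg hC) _)

end Prod

section FinCons

variable {n : ℕ} {Ω : Fin (n + 1) → Type*} [∀ k, MeasurableSpace (Ω k)]

lemma finCons_eq_piFinSuccAbove_symm :
    (fun p : Ω 0 × (∀ j : Fin n, Ω j.succ) => (Fin.cons p.1 p.2 : ∀ i, Ω i))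
      = (MeasurableEquiv.piFinSuccAbove Ω 0).symm := by
  funext p
  exact (Fin.insertNth_zero p.1 p.2).symm

variable (μ : ∀ k, Measure (Ω k)) [∀ k, SigmaFinite (μ k)]

lemma measurePreserving_finCons :
    MeasurePreserving (fun p : Ω 0 × (∀ j : Fin n, Ω j.succ) => (Fin.cons p.1 p.2 : ∀ i, Ω i))
      ((μ 0).prod (Measure.pi fun j => μ j.succ)) (Measure.pi μ) := by
  rw [finCons_eq_piFinSuccAbove_symm]
  exact (measurePreserving_piFinSuccAbove μ 0).symm

lemma integral_pi_eq_integral_prod_finCons {E : Type*} [NormedAddCommGroup E] [NormedSpace ℝ E]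
    (h : (∀ i, Ω i) → E) :
    ∫ x, h x ∂(Measure.pi μ)
      = ∫ p, h (Fin.cons p.1 p.2) ∂((μ 0).prod (Measure.pi fun j => μ j.succ)) := by
  rw [← (measurePreserving_piFinSuccAbove μ 0).symm.integral_comp',
    ← finCons_eq_piFinSuccAbove_symm]
  rfl

end FinCons

section EfronStein

lemma integrable_variance_update {ι : Type*} [Fintype ι] [DecidableEq ι] {Ω : ι → Type*}
    [∀ k, MeasurableSpace (Ω k)] (μ : ∀ k, Measure (Ω k)) [∀ k, IsProbabilityMeasure (μ k)]
    {f : (∀ i, Ω i) → ℝ} (hf : Measurable f) {C : ℝ} (hC : ∀ x, |f x| ≤ C) (k : ι) :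
    Integrable (fun x => Var[fun y => f (Function.update x k y); μ k]) (Measure.pi μ) :=
  integrable_variance_prodMk (g := fun p : (∀ i, Ω i) × Ω k => f (Function.update p.1 k p.2))
    (hf.comp measurable_update') fun _ => hC _

lemma condVarK_eq_variance {n : ℕ} {Ω : Fin n → Type*} [∀ k, MeasurableSpace (Ω k)]
    (μ : ∀ k, Measure (Ω k)) {f : (∀ i, Ω i) → ℝ} (hf : Measurable f) (k : Fin n)
    (x : ∀ i, Ω i) : condVarK μ k f x = Var[fun y => f (Function.update x k y); μ k] :=
  (variance_eq_integral (hf.comp (measurable_update x)).aemeasurable).symm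

variable {n : ℕ} {Ω : Fin (n + 1) → Type*} [∀ k, MeasurableSpace (Ω k)]
  (μ : ∀ k, Measure (Ω k)) [∀ k, IsProbabilityMeasure (μ k)] {f : (∀ i, Ω i) → ℝ} {C : ℝ}

lemma integrable_variance_update_finCons (hf : Measurable f) (hC : ∀ x, |f x| ≤ C)
    (k : Fin (n + 1)) :
    Integrable (fun p : Ω 0 × (∀ j : Fin n, Ω j.succ) =>
        Var[fun y => f (Function.update (Fin.cons p.1 p.2) k y); μ k])
      ((μ 0).prod (Measure.pi fun j => μ j.succ)) :=
  (measurePreserving_finCons μ).integrable_comp_of_integrable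
    (integrable_variance_update μ hf hC k)

lemma integral_sum_variance_update_finCons (hf : Measurable f) (hC : ∀ x, |f x| ≤ C) :
    ∫ x, ∑ k, Var[fun y => f (Function.update x k y); μ k] ∂(Measure.pi μ)
      = ∫ x', Var[fun y => f (Fin.cons y x'); μ 0] ∂(Measure.pi fun j : Fin n => μ j.succ)
        + ∫ x₀, ∫ x', ∑ k : Fin n, Var[fun y => f (Fin.cons x₀ (Function.update x' k y)); μ k.succ]
            ∂(Measure.pi fun j : Fin n => μ j.succ) ∂(μ 0) := by
  have hV := integrable_variance_update_finCons μ hf hC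
  have hVsucc := integrable_finsetSum Finset.univ fun (k : Fin n) _ => hV k.succ
  rw [integral_pi_eq_integral_prod_finCons]
  simp_rw [Fin.sum_univ_succ]
  rw [integral_add (hV 0) hVsucc, integral_prod_symm _ (hV 0), integral_prod _ hVsucc]
  simp_rw [Fin.update_cons_zero, Fin.cons_update, integral_const, probReal_univ, one_smul]

end EfronStein

theorem variance_pi_le_integral_sum_variance_update {n : ℕ} {Ω : Fin n → Type*}
    [∀ k, MeasurableSpace (Ω k)] (μ : ∀ k, Measure (Ω k)) [∀ k, IsProbabilityMeasure (μ k)]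
    {f : (∀ i, Ω i) → ℝ} (hf : Measurable f) {C : ℝ} (hC : ∀ x, |f x| ≤ C) :
    Var[f; Measure.pi μ]
      ≤ ∫ x, ∑ k, Var[fun y => f (Function.update x k y); μ k] ∂(Measure.pi μ) := by
  induction n with
  | zero =>
    have hconst : f = fun _ => f isEmptyElim := funext fun x => congrArg f (Subsingleton.elim _ _)
    rw [hconst, variance_eq_integral aemeasurable_const]
    simp
  | succ n ih =>
    set π' := Measure.pi fun j : Fin n => μ j.succ
    have hg : Measurable fun p : Ω 0 × (∀ j : Fin n, Ω j.succ) => f (Fin.cons p.1 p.2) :=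
      hf.comp (measurePreserving_finCons μ).measurable
    have hsections : ∀ x₀, Var[fun x' => f (Fin.cons x₀ x'); π']
        ≤ ∫ x', ∑ k : Fin n, Var[fun y => f (Fin.cons x₀ (Function.update x' k y)); μ k.succ] ∂π' :=
      fun x₀ => ih (fun j => μ j.succ) (hg.comp measurable_prodMk_left) fun _ => hC _
    have hint : Integrable (fun x₀ => ∫ x', ∑ k : Fin n,
        Var[fun y => f (Fin.cons x₀ (Function.update x' k y)); μ k.succ] ∂π') (μ 0) := by
      simpa only [Fin.cons_update] using (integrable_finsetSum Finset.univ fun (k : Fin n) _ =>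
        integrable_variance_update_finCons μ hf hC k.succ).integral_prod_left
    calc Var[f; Measure.pi μ] = Var[fun p => f (Fin.cons p.1 p.2); (μ 0).prod π'] :=
          ((measurePreserving_finCons μ).variance_fun_comp hf.aemeasurable).symm
      _ ≤ ∫ x₀, Var[fun x' => f (Fin.cons x₀ x'); π'] ∂(μ 0)
          + ∫ x', Var[fun y => f (Fin.cons y x'); μ 0] ∂π' := variance_prod_le hg fun _ => hC _
      _ ≤ ∫ x₀, ∫ x', ∑ k : Fin n,
              Var[fun y => f (Fin.cons x₀ (Function.update x' k y)); μ k.succ] ∂π' ∂(μ 0)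
          + ∫ x', Var[fun y => f (Fin.cons y x'); μ 0] ∂π' :=
        add_le_add_left (integral_mono_of_nonneg (ae_of_all _ fun _ => variance_nonneg _ _) hint
          (ae_of_all _ hsections)) _
      _ = _ := (add_comm _ _).trans (integral_sum_variance_update_finCons μ hf hC).symm

section Statements

variable {n : ℕ} {Ω : Fin n → Type*} [∀ k, MeasurableSpace (Ω k)]

/-- Efron–Stein–Steele inequality. -/
theorem stmt_7 (μ : ∀ k, Measure (Ω k)) [∀ k, IsProbabilityMeasure (μ k)]
    (f : (∀ i, Ω i) → ℝ) (hf : Measurable f) (C : ℝ) (hC : ∀ x, |f x| ≤ C) :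
    ∫ x, (f x - ∫ y, f y ∂(Measure.pi μ)) ^ 2 ∂(Measure.pi μ)
      ≤ ∫ x, ∑ k, condVarK μ k f x ∂(Measure.pi μ) := by
  rw [← variance_eq_integral hf.aemeasurable]
  simp_rw [condVarK_eq_variance μ hf]
  exact variance_pi_le_integral_sum_variance_update μ hf hC

end Statements
end

section
/- Modified logarithmic Sobolev inequality: if for each k the function f_k : Ω → ℝ is bounded measurable and independent of the k-th coordinate, then for every β ∈ ℝ, S_f(β) ≤ E_{βf}[ Σ_{k=1}^n ψ( −β(f − f_k) ) ], where ψ(t) = e^t − t − 1. -/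
open MeasureTheory Real

section Statements

variable {n : ℕ} {Ω : Fin n → Type*} [∀ k, MeasurableSpace (Ω k)]

/-- `ψ(t) = e^t − t − 1`. -/
noncomputable def psi (t : ℝ) : ℝ := Real.exp t - t - 1

/-!
Write `Ent(e^u) = E[u e^u] - E[e^u] log E[e^u]`, so that `S_f(β) Z_{βf} = Ent(e^{βf})`.

Entropy tensorizes. On a product `ν ⊗ κ` the chain rule splits `Ent(e^u)` into the `ν`-mean of
the entropies of the slices `u(y, ·)` plus the `ν`-entropy of `y ↦ κ[e^{u(y, ·)}]`; by the Gibbs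
variational principle (`E[e^u h] ≤ Ent(e^u)` whenever `E[e^h] ≤ 1`, an integrated form of Young's
inequality `e^t s ≤ t e^t - e^t + e^s`) the latter is at most the `κ`-mean of the entropies of the
slices `u(·, z)`. Induction on the number of coordinates bounds `Ent(e^u)` by the sum over `k` of
the mean entropies along coordinate `k`.

Along one coordinate, Young's inequality again gives `Ent(e^u) ≤ E[e^u ψ(c - u)]` for every
constant `c`; for `u = βf` take `c = βf_k(x)`, which does not depend on that coordinate.
-/

lemma continuous_psi : Continuous psi := by
  unfold psi
  fun_prop

/-- `Ent_ρ(e^u)`, the entropy of the unnormalized density `e^u`. -/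
noncomputable def expEntropy {α : Type*} [MeasurableSpace α] (ρ : Measure α) (u : α → ℝ) : ℝ :=
  (∫ x, u x * exp (u x) ∂ρ) - (∫ x, exp (u x) ∂ρ) * log (∫ x, exp (u x) ∂ρ)

lemma MeasureTheory.MeasurePreserving.expEntropy_comp {α β : Type*} [MeasurableSpace α]
    [MeasurableSpace β] {ρ : Measure α} {ρ' : Measure β} {e : α ≃ᵐ β}
    (he : MeasurePreserving e ρ ρ') (u : β → ℝ) :
    expEntropy ρ (fun x => u (e x)) = expEntropy ρ' u := by
  simp only [expEntropy, he.integral_comp' (fun y => u y * exp (u y)),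
    he.integral_comp' (fun y => exp (u y))]

section FiniteMeasure

variable {α : Type*} [MeasurableSpace α] {ρ : Measure α} [IsFiniteMeasure ρ]
  {u : α → ℝ} {C : ℝ}

lemma Continuous.integrable_comp₂_of_mem_Icc {Φ : ℝ → ℝ → ℝ}
    (hΦ : Continuous (Function.uncurry Φ)) {v : α → ℝ} {a b c d : ℝ} (hu : Measurable u)
    (hv : Measurable v) (hua : ∀ x, u x ∈ Set.Icc a b) (hvc : ∀ x, v x ∈ Set.Icc c d) :
    Integrable (fun x => Φ (u x) (v x)) ρ := by
  obtain ⟨K, hK⟩ := (isCompact_Icc.prod isCompact_Icc).exists_bound_of_continuousOn hΦ.continuousOn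
  exact .of_bound (hΦ.measurable.comp (hu.prodMk hv)).aestronglyMeasurable K
    (.of_forall fun x => hK (u x, v x) ⟨hua x, hvc x⟩)

lemma Continuous.integrable_comp_of_mem_Icc {Φ : ℝ → ℝ} (hΦ : Continuous Φ) {a b : ℝ}
    (hu : Measurable u) (hua : ∀ x, u x ∈ Set.Icc a b) :
    Integrable (fun x => Φ (u x)) ρ :=
  (hΦ.comp continuous_fst).integrable_comp₂_of_mem_Icc (Φ := fun s _ => Φ s) hu hu hua hua

lemma integrable_exp_of_abs_le (hu : Measurable u) (huC : ∀ x, |u x| ≤ C) :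
    Integrable (fun x => exp (u x)) ρ :=
  continuous_exp.integrable_comp_of_mem_Icc hu fun x => abs_le.1 (huC x)

lemma integrable_mul_exp_of_abs_le (hu : Measurable u) (huC : ∀ x, |u x| ≤ C) :
    Integrable (fun x => u x * exp (u x)) ρ :=
  (continuous_id.mul continuous_exp).integrable_comp_of_mem_Icc hu fun x => abs_le.1 (huC x)

lemma integrable_exp_mul_psi_sub {v : α → ℝ} {D : ℝ} (hu : Measurable u) (hv : Measurable v)
    (huC : ∀ x, |u x| ≤ C) (hvD : ∀ x, |v x| ≤ D) :
    Integrable (fun x => exp (u x) * psi (v x - u x)) ρ :=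
  (continuous_exp.comp continuous_fst |>.mul (continuous_psi.comp
    (continuous_snd.sub continuous_fst))).integrable_comp₂_of_mem_Icc
    (Φ := fun s t => exp s * psi (t - s)) hu hv (fun x => abs_le.1 (huC x))
    fun x => abs_le.1 (hvD x)

lemma expEntropy_eq_integral_exp_mul_sub_log (hu : Measurable u) (huC : ∀ x, |u x| ≤ C) :
    expEntropy ρ u = ∫ x, exp (u x) * (u x - log (∫ y, exp (u y) ∂ρ)) ∂ρ := by
  simp_rw [mul_sub]
  rw [integral_sub ((integrable_mul_exp_of_abs_le hu huC).congr (.of_forall fun x => mul_comm _ _))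
    ((integrable_exp_of_abs_le hu huC).mul_const _), integral_mul_const, expEntropy]
  simp_rw [mul_comm (exp _)]

end FiniteMeasure

lemma exp_mul_le_mul_exp_sub_exp_add_exp (t s : ℝ) : exp t * s ≤ t * exp t - exp t + exp s := by
  have h := mul_le_mul_of_nonneg_left (add_one_le_exp (s - t)) (exp_pos t).le
  rw [← exp_add, add_sub_cancel] at h
  linarith

section ExpEntropy

variable {α : Type*} [MeasurableSpace α] {ρ : Measure α} [IsProbabilityMeasure ρ]
  {u : α → ℝ} {C : ℝ}

lemma integral_exp_pos_of_abs_le (hu : Measurable u) (huC : ∀ x, |u x| ≤ C) :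
    0 < ∫ x, exp (u x) ∂ρ :=
  integral_exp_pos (integrable_exp_of_abs_le hu huC)

lemma integral_exp_mem_Icc (hu : Measurable u) (huC : ∀ x, |u x| ≤ C) :
    ∫ x, exp (u x) ∂ρ ∈ Set.Icc (exp (-C)) (exp C) := by
  have hint := integrable_exp_of_abs_le (ρ := ρ) hu huC
  constructor
  · simpa using integral_mono (integrable_const _) hint fun x => exp_le_exp.2 (abs_le.1 (huC x)).1
  · simpa using integral_mono hint (integrable_const _) fun x => exp_le_exp.2 (abs_le.1 (huC x)).2

lemma abs_log_integral_exp_le (hu : Measurable u) (huC : ∀ x, |u x| ≤ C) :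
    |log (∫ x, exp (u x) ∂ρ)| ≤ C := by
  have hZ := integral_exp_pos_of_abs_le (ρ := ρ) hu huC
  obtain ⟨hlow, hup⟩ := integral_exp_mem_Icc (ρ := ρ) hu huC
  exact abs_le.2 ⟨(le_log_iff_exp_le hZ).2 hlow, (log_le_iff_le_exp hZ).2 hup⟩

lemma integral_exp_sub_log_integral_exp (hu : Measurable u) (huC : ∀ x, |u x| ≤ C) :
    ∫ x, exp (u x - log (∫ y, exp (u y) ∂ρ)) ∂ρ = 1 := by
  have hZ := integral_exp_pos_of_abs_le (ρ := ρ) hu huC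
  simp_rw [exp_sub, exp_log hZ]
  rw [integral_div, div_self hZ.ne']

/-- One half of the Gibbs variational principle. -/
lemma integral_exp_mul_le_expEntropy {h : α → ℝ} {D : ℝ} (hu : Measurable u)
    (huC : ∀ x, |u x| ≤ C) (hh : Measurable h) (hhD : ∀ x, |h x| ≤ D)
    (hh1 : ∫ x, exp (h x) ∂ρ ≤ 1) :
    ∫ x, exp (u x) * h x ∂ρ ≤ expEntropy ρ u := by
  set Z := ∫ x, exp (u x) ∂ρ
  have hZ : 0 < Z := integral_exp_pos_of_abs_le hu huC
  have hyoung : ∀ x, exp (u x) * h x ≤ exp (u x) * (u x - log Z) - exp (u x) + Z * exp (h x) :=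
    fun x => by
      have := exp_mul_le_mul_exp_sub_exp_add_exp (u x) (h x + log Z)
      rw [exp_add, exp_log hZ] at this
      linarith
  have hent : Integrable (fun x => exp (u x) * (u x - log Z)) ρ :=
    (continuous_exp.mul (continuous_id.sub continuous_const)).integrable_comp_of_mem_Icc hu
      fun x => abs_le.1 (huC x)
  have hexp : Integrable (fun x => exp (u x)) ρ := integrable_exp_of_abs_le hu huC
  have hexph : Integrable (fun x => Z * exp (h x)) ρ :=
    (integrable_exp_of_abs_le hh hhD).const_mul Z
  have hlhs : Integrable (fun x => exp (u x) * h x) ρ :=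
    (continuous_exp.comp continuous_fst |>.mul continuous_snd).integrable_comp₂_of_mem_Icc
      (Φ := fun s t => exp s * t) hu hh (fun x => abs_le.1 (huC x)) fun x => abs_le.1 (hhD x)
  have hrhs : Integrable (fun x => exp (u x) * (u x - log Z) - exp (u x)) ρ := hent.sub hexp
  calc ∫ x, exp (u x) * h x ∂ρ
      ≤ ∫ x, exp (u x) * (u x - log Z) - exp (u x) + Z * exp (h x) ∂ρ :=
        integral_mono hlhs (hrhs.add hexph) hyoung
    _ = expEntropy ρ u - Z + Z * ∫ x, exp (h x) ∂ρ := by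
        rw [integral_add hrhs hexph, integral_sub hent hexp, integral_const_mul,
          ← expEntropy_eq_integral_exp_mul_sub_log hu huC]
    _ ≤ expEntropy ρ u := by nlinarith

lemma expEntropy_le_integral_exp_mul_psi (hu : Measurable u) (huC : ∀ x, |u x| ≤ C) (c : ℝ) :
    expEntropy ρ u ≤ ∫ x, exp (u x) * psi (c - u x) ∂ρ := by
  set Z := ∫ x, exp (u x) ∂ρ
  have hZ : 0 < Z := integral_exp_pos_of_abs_le hu huC
  have hexp : Integrable (fun x => exp (u x)) ρ := integrable_exp_of_abs_le hu huC
  have hue : Integrable (fun x => u x * exp (u x)) ρ := integrable_mul_exp_of_abs_le hu huC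
  have hlin : Integrable (fun x => exp c - c * exp (u x)) ρ :=
    (integrable_const _).sub (hexp.const_mul c)
  have hpsi : ∀ x, exp (u x) * psi (c - u x)
      = (exp c - c * exp (u x)) + (u x * exp (u x) - exp (u x)) := fun x => by
    rw [psi, exp_sub]
    field_simp
    ring
  have hnl : Integrable (fun x => u x * exp (u x) - exp (u x)) ρ := hue.sub hexp
  simp_rw [hpsi]
  rw [integral_add hlin hnl, integral_sub (integrable_const _) (hexp.const_mul c),
    integral_sub hue hexp, integral_const_mul, integral_const, expEntropy]
  have := exp_mul_le_mul_exp_sub_exp_add_exp (log Z) c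
  rw [exp_log hZ] at this
  simp only [probReal_univ, smul_eq_mul, one_mul]
  linarith

end ExpEntropy

section Product

variable {α γ : Type*} [MeasurableSpace α] [MeasurableSpace γ]
  {ν : Measure α} {κ : Measure γ} [IsProbabilityMeasure ν] [IsProbabilityMeasure κ]
  {u : α × γ → ℝ} {C : ℝ}

lemma measurable_integral_exp_slice (hu : Measurable u) :
    Measurable fun y => ∫ z, exp (u (y, z)) ∂κ :=
  (hu.exp.stronglyMeasurable.integral_prod_right' (f := fun p => exp (u p))).measurable

lemma integrable_expEntropy_slice (hu : Measurable u) (huC : ∀ p, |u p| ≤ C) :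
    Integrable (fun y => expEntropy κ fun z => u (y, z)) ν :=
  (integrable_mul_exp_of_abs_le hu huC).integral_prod_left.sub
    (continuous_mul_log.integrable_comp_of_mem_Icc (measurable_integral_exp_slice hu)
      fun y => integral_exp_mem_Icc (hu.comp measurable_prodMk_left) fun z => huC (y, z))

theorem expEntropy_prod_eq (hu : Measurable u) (huC : ∀ p, |u p| ≤ C) :
    expEntropy (ν.prod κ) u = (∫ y, expEntropy κ (fun z => u (y, z)) ∂ν)
      + expEntropy ν (fun y => log (∫ z, exp (u (y, z)) ∂κ)) := by
  set v : α → ℝ := fun y => log (∫ z, exp (u (y, z)) ∂κ)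
  have hv : Measurable v := (measurable_integral_exp_slice hu).log
  have hvC : ∀ y, |v y| ≤ C := fun y =>
    abs_log_integral_exp_le (hu.comp measurable_prodMk_left) fun z => huC (y, z)
  have hexpv : ∀ y, exp (v y) = ∫ z, exp (u (y, z)) ∂κ := fun y =>
    exp_log (integral_exp_pos_of_abs_le (hu.comp measurable_prodMk_left) fun z => huC (y, z))
  have hslice : ∀ y, expEntropy κ (fun z => u (y, z))
      = (∫ z, u (y, z) * exp (u (y, z)) ∂κ) - v y * exp (v y) := fun y => by
    rw [expEntropy, hexpv, mul_comm (v y)]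
  have hZ : ∫ y, exp (v y) ∂ν = ∫ p, exp (u p) ∂(ν.prod κ) := by
    simp_rw [hexpv]
    exact (integral_prod _ (integrable_exp_of_abs_le hu huC)).symm
  have hue := integrable_mul_exp_of_abs_le (ρ := ν.prod κ) hu huC
  simp_rw [hslice]
  rw [integral_sub hue.integral_prod_left (integrable_mul_exp_of_abs_le hv hvC),
    ← integral_prod _ hue, expEntropy, expEntropy, hZ]
  ring

theorem expEntropy_log_integral_exp_le (hu : Measurable u) (huC : ∀ p, |u p| ≤ C) :
    expEntropy ν (fun y => log (∫ z, exp (u (y, z)) ∂κ))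
      ≤ ∫ z, expEntropy ν (fun y => u (y, z)) ∂κ := by
  set v : α → ℝ := fun y => log (∫ z, exp (u (y, z)) ∂κ)
  have hv : Measurable v := (measurable_integral_exp_slice hu).log
  have hvC : ∀ y, |v y| ≤ C := fun y =>
    abs_log_integral_exp_le (hu.comp measurable_prodMk_left) fun z => huC (y, z)
  have hexpv : ∀ y, exp (v y) = ∫ z, exp (u (y, z)) ∂κ := fun y =>
    exp_log (integral_exp_pos_of_abs_le (hu.comp measurable_prodMk_left) fun z => huC (y, z))
  set h : α → ℝ := fun y => v y - log (∫ y, exp (v y) ∂ν)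
  have hh : Measurable h := hv.sub_const _
  have hhC : ∀ y, |h y| ≤ C + C := fun y =>
    (abs_sub _ _).trans (add_le_add (hvC y) (abs_log_integral_exp_le hv hvC))
  have hint : Integrable (fun p : α × γ => exp (u p) * h p.1) (ν.prod κ) :=
    (continuous_exp.comp continuous_fst |>.mul continuous_snd).integrable_comp₂_of_mem_Icc
      (Φ := fun s t => exp s * t) hu (hh.comp measurable_fst) (fun p => abs_le.1 (huC p))
      fun p => abs_le.1 (hhC p.1)
  calc expEntropy ν v = ∫ y, exp (v y) * h y ∂ν :=
        expEntropy_eq_integral_exp_mul_sub_log hv hvC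
    _ = ∫ y, ∫ z, exp (u (y, z)) * h y ∂κ ∂ν := by simp_rw [hexpv, integral_mul_const]
    _ = ∫ z, ∫ y, exp (u (y, z)) * h y ∂ν ∂κ := integral_integral_swap hint
    _ ≤ ∫ z, expEntropy ν (fun y => u (y, z)) ∂κ :=
        integral_mono hint.integral_prod_right
          (integrable_expEntropy_slice (u := u ∘ Prod.swap) (hu.comp measurable_swap)
            fun p => huC p.swap)
          fun z => integral_exp_mul_le_expEntropy (hu.comp measurable_prodMk_right)
            (fun y => huC (y, z)) hh hhC (integral_exp_sub_log_integral_exp hv hvC).le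

theorem expEntropy_prod_le (hu : Measurable u) (huC : ∀ p, |u p| ≤ C) :
    expEntropy (ν.prod κ) u ≤ (∫ y, expEntropy κ (fun z => u (y, z)) ∂ν)
      + ∫ z, expEntropy ν (fun y => u (y, z)) ∂κ := by
  rw [expEntropy_prod_eq hu huC]
  exact add_le_add_right (expEntropy_log_integral_exp_le hu huC) _

theorem integral_expEntropy_slice_le_integral_exp_mul_psi {v : α × γ → ℝ} {D : ℝ}
    (hu : Measurable u) (huC : ∀ p, |u p| ≤ C) (hv : Measurable v) (hvD : ∀ p, |v p| ≤ D)
    (hvind : ∀ y y' z, v (y, z) = v (y', z)) :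
    ∫ z, expEntropy ν (fun y => u (y, z)) ∂κ
      ≤ ∫ p, exp (u p) * psi (v p - u p) ∂(ν.prod κ) := by
  obtain ⟨y₀⟩ := nonempty_of_isProbabilityMeasure ν
  have hint := integrable_exp_mul_psi_sub (ρ := ν.prod κ) hu hv huC hvD
  rw [integral_prod_symm _ hint]
  refine integral_mono (integrable_expEntropy_slice (u := u ∘ Prod.swap) (hu.comp measurable_swap)
    fun p => huC p.swap) hint.integral_prod_right fun z => ?_
  simp_rw [hvind _ y₀ z]
  exact expEntropy_le_integral_exp_mul_psi (hu.comp measurable_prodMk_right) (fun y => huC _) _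

end Product

lemma integral_le_sum_integral_prod {α γ ι : Type*} [MeasurableSpace α] [MeasurableSpace γ]
    {ν : Measure α} {κ : Measure γ} [SFinite ν] [SFinite κ] (s : Finset ι) {B : α → ℝ}
    {G : ι → α × γ → ℝ} (hB : Integrable B ν) (hG : ∀ i, Integrable (G i) (ν.prod κ))
    (hBG : ∀ y, B y ≤ ∑ i ∈ s, ∫ z, G i (y, z) ∂κ) :
    ∫ y, B y ∂ν ≤ ∑ i ∈ s, ∫ p, G i p ∂(ν.prod κ) := by
  calc ∫ y, B y ∂ν ≤ ∫ y, ∑ i ∈ s, ∫ z, G i (y, z) ∂κ ∂ν :=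
        integral_mono hB (integrable_finsetSum _ fun i _ => (hG i).integral_prod_left) hBG
    _ = ∑ i ∈ s, ∫ p, G i p ∂(ν.prod κ) := by
        rw [integral_finsetSum _ fun i _ => (hG i).integral_prod_left]
        simp_rw [integral_prod _ (hG _)]

theorem expEntropy_pi_le_sum_integral_exp_mul_psi (μ : ∀ k, Measure (Ω k))
    [∀ k, IsProbabilityMeasure (μ k)] {u : (∀ k, Ω k) → ℝ} {C : ℝ} (hu : Measurable u)
    (huC : ∀ x, |u x| ≤ C) {V : Fin n → (∀ k, Ω k) → ℝ} {D : ℝ}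
    (hV : ∀ k, Measurable (V k)) (hVD : ∀ k x, |V k x| ≤ D)
    (hVind : ∀ k x y, V k (Function.update x k y) = V k x) :
    expEntropy (Measure.pi μ) u
      ≤ ∑ k, ∫ x, exp (u x) * psi (V k x - u x) ∂(Measure.pi μ) := by
  induction n with
  | zero =>
    have hu0 : u = fun _ => u default := funext fun x => congrArg u (Subsingleton.elim x default)
    rw [hu0]
    simp [expEntropy, mul_comm]
  | succ n ih =>
    set ν := fun j => μ (Fin.succAbove 0 j)
    set e := MeasurableEquiv.piFinSuccAbove Ω 0
    have he : MeasurePreserving e.symm ((μ 0).prod (Measure.pi ν)) (Measure.pi μ) :=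
      (measurePreserving_piFinSuccAbove μ 0).symm
    set w := fun p => u (e.symm p)
    have hw : Measurable w := hu.comp e.symm.measurable
    set F := fun k p => exp (w p) * psi (V k (e.symm p) - w p)
    have hpiF : ∀ k, ∫ p, F k p ∂((μ 0).prod (Measure.pi ν))
        = ∫ x, exp (u x) * psi (V k x - u x) ∂(Measure.pi μ) := fun k =>
      he.integral_comp' fun x => exp (u x) * psi (V k x - u x)
    -- `e.symm (y, z) = Fin.insertNth 0 y z`, so updating a coordinate commutes with `e.symm`
    have hfirst : ∫ z, expEntropy (μ 0) (fun y => w (y, z)) ∂(Measure.pi ν)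
        ≤ ∫ p, F 0 p ∂((μ 0).prod (Measure.pi ν)) :=
      integral_expEntropy_slice_le_integral_exp_mul_psi hw (fun p => huC _)
        ((hV 0).comp e.symm.measurable) (fun p => hVD 0 _) fun y y' z => by
          rw [← hVind 0 (e.symm (y', z)) y]
          exact congrArg (V 0) (Fin.update_insertNth 0 y' y z).symm
    have hrest : ∫ y, expEntropy (Measure.pi ν) (fun z => w (y, z)) ∂(μ 0)
        ≤ ∑ j, ∫ p, F (Fin.succAbove 0 j) p ∂((μ 0).prod (Measure.pi ν)) :=
      integral_le_sum_integral_prod _ (integrable_expEntropy_slice hw fun p => huC _)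
        (fun j => integrable_exp_mul_psi_sub hw ((hV _).comp e.symm.measurable)
          (fun p => huC _) fun p => hVD _ _) fun y =>
        ih ν (hw.comp measurable_prodMk_left) (fun z => huC _)
          (V := fun j z => V (Fin.succAbove 0 j) (e.symm (y, z)))
          (fun j => (hV _).comp (e.symm.measurable.comp measurable_prodMk_left))
          (fun j z => hVD _ _) fun j z t => by
            rw [← hVind (Fin.succAbove 0 j) (e.symm (y, z)) t]
            exact congrArg _ (Fin.insertNth_update 0 y j t z)
    calc expEntropy (Measure.pi μ) u = expEntropy ((μ 0).prod (Measure.pi ν)) w :=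
          (he.expEntropy_comp u).symm
      _ ≤ (∫ y, expEntropy (Measure.pi ν) (fun z => w (y, z)) ∂(μ 0))
            + ∫ z, expEntropy (μ 0) (fun y => w (y, z)) ∂(Measure.pi ν) :=
          expEntropy_prod_le hw fun p => huC _
      _ ≤ (∑ j, ∫ p, F (Fin.succAbove 0 j) p ∂((μ 0).prod (Measure.pi ν)))
            + ∫ p, F 0 p ∂((μ 0).prod (Measure.pi ν)) := add_le_add hrest hfirst
      _ = ∑ k, ∫ x, exp (u x) * psi (V k x - u x) ∂(Measure.pi μ) := by
          rw [Fin.sum_univ_succAbove _ 0, add_comm]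
          simp only [hpiF]

lemma canEntropy_eq_expEntropy_div {α : Type*} [MeasurableSpace α] (ν : Measure α)
    (f : α → ℝ) (β : ℝ) :
    canEntropy ν f β = expEntropy ν (fun x => β * f x) / ∫ x, exp (β * f x) ∂ν := by
  rw [canEntropy, thermalExp, expEntropy]
  simp_rw [mul_assoc]
  rw [integral_const_mul]
  rcases eq_or_ne (∫ x, exp (β * f x) ∂ν) 0 with hZ | hZ
  · simp [hZ]
  · field_simp

/-- Modified logarithmic Sobolev inequality. -/
theorem stmt_8 (μ : ∀ k, Measure (Ω k)) [∀ k, IsProbabilityMeasure (μ k)]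
    (f : (∀ i, Ω i) → ℝ) (hf : Measurable f) (C : ℝ) (hC : ∀ x, |f x| ≤ C)
    (F : Fin n → (∀ i, Ω i) → ℝ) (hFmeas : ∀ k, Measurable (F k))
    (CF : ℝ) (hCF : ∀ k x, |F k x| ≤ CF)
    (hind : ∀ k x y, F k (Function.update x k y) = F k x) (β : ℝ) :
    canEntropy (Measure.pi μ) f β
      ≤ thermalExp (Measure.pi μ) β f (fun x => ∑ k, psi (-β * (f x - F k x))) := by
  have hu : Measurable fun x => β * f x := hf.const_mul β
  have huC : ∀ x, |β * f x| ≤ |β| * C := fun x => by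
    rw [abs_mul]
    exact mul_le_mul_of_nonneg_left (hC x) (abs_nonneg β)
  have hV : ∀ k, Measurable fun x => β * F k x := fun k => (hFmeas k).const_mul β
  have hVD : ∀ k x, |β * F k x| ≤ |β| * CF := fun k x => by
    rw [abs_mul]
    exact mul_le_mul_of_nonneg_left (hCF k x) (abs_nonneg β)
  have hmain := expEntropy_pi_le_sum_integral_exp_mul_psi μ hu huC hV hVD fun k x y => by
    rw [hind]
  rw [canEntropy_eq_expEntropy_div, thermalExp]
  refine div_le_div_of_nonneg_right (hmain.trans_eq ?_) (integral_nonneg fun x => (exp_pos _).le)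
  rw [← integral_finsetSum _ fun k _ => integrable_exp_mul_psi_sub hu (hV k) huC (hVD k)]
  refine integral_congr_ae (.of_forall fun x => ?_)
  simp only [Finset.sum_mul]
  refine Finset.sum_congr rfl fun k _ => ?_
  rw [mul_comm, show β * F k x - β * f x = -β * (f x - F k x) by ring]

end Statements
end

section
/- Bounded difference inequality (strong form): for every t > 0, μ{x : f(x) − E[f] > t} ≤ exp( −2t² / ‖R²(f)‖_∞ ), where R²(f) = Σ_{k=1}^n ran_k²(f) is the sum of the squared conditional ranges and ‖·‖_∞ is the essential supremum norm. -/
open MeasureTheory Real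

/-!
The entropy method. For `ψ(s) = log E e^{s f}` the canonical entropy `S(s) = s ψ'(s) - ψ(s)`
equals `Ent(e^{s f}) / E e^{s f}`. Entropy is subadditive over product measures, which bounds
`S(s)` by the thermal expectation of `Σ_k S_k(s)`, where `S_k` is the canonical entropy of the
`k`-th conditional distribution. Hoeffding's lemma in entropy form gives `S_k(s) ≤ s² ran_k² / 8`,
so `S(s) ≤ s² c / 8` with `c = ‖R²(f)‖_∞`. Since `(ψ(s) / s)' = S(s) / s²`, integrating from `0`
gives `ψ(β) ≤ β E f + β² c / 8` (Herbst), and a Chernoff bound at `β = 4 t / c` finishes.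
-/

open ProbabilityTheory Set Filter

namespace BoundedDifference

section Entropy

variable {α : Type*} [MeasurableSpace α]

noncomputable def entropy (ν : Measure α) (g : α → ℝ) : ℝ :=
  ∫ x, g x * log (g x) ∂ν - (∫ x, g x ∂ν) * log (∫ x, g x ∂ν)

lemma mul_le_mul_log_sub_sub_add_exp {a b : ℝ} (ha : 0 < a) (hb : 0 < b) (y : ℝ) :
    a * y ≤ a * (log a - log b) - a + b * exp y := by
  have h := mul_le_mul_of_nonneg_left (add_one_le_exp (y - (log a - log b))) ha.le
  have he : a * exp (y - (log a - log b)) = b * exp y := by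
    rw [exp_sub, exp_sub, exp_log ha, exp_log hb]
    field_simp
  nlinarith [h]

lemma abs_log_sub_log_le {c C y z : ℝ} (hc : 0 < c) (hy : y ∈ Icc c C) (hz : z ∈ Icc c C) :
    |log y - log z| ≤ log C - log c := by
  have := log_le_log hc hy.1
  have := log_le_log (hc.trans_le hy.1) hy.2
  have := log_le_log hc hz.1
  have := log_le_log (hc.trans_le hz.1) hz.2
  rw [abs_le]
  constructor <;> linarith

variable {ν : Measure α} {g : α → ℝ} {c C : ℝ}

lemma integrable_comp_of_mem_Icc [IsFiniteMeasure ν] {φ : ℝ → ℝ} (hφ : Continuous φ)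
    (hg : Measurable g) (hgb : ∀ x, g x ∈ Icc c C) : Integrable (fun x => φ (g x)) ν := by
  obtain ⟨M, hM⟩ := isCompact_Icc.exists_bound_of_continuousOn hφ.continuousOn
  exact .of_bound (hφ.measurable.comp hg).aestronglyMeasurable M
    (.of_forall fun x => hM _ (hgb x))

lemma integral_mem_Icc [IsProbabilityMeasure ν] (hg : Measurable g) (hgb : ∀ x, g x ∈ Icc c C) :
    ∫ x, g x ∂ν ∈ Icc c C := by
  have hgi : Integrable g ν := .of_mem_Icc c C hg.aemeasurable (.of_forall hgb)
  constructor
  · simpa using integral_mono (integrable_const c) hgi fun x => (hgb x).1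
  · simpa using integral_mono hgi (integrable_const C) fun x => (hgb x).2

lemma entropy_const [IsProbabilityMeasure ν] (a : ℝ) : entropy ν (fun _ => a) = 0 := by
  simp [entropy]

lemma abs_entropy_le [IsProbabilityMeasure ν] {M : ℝ} (hM : ∀ y ∈ Icc c C, ‖y * log y‖ ≤ M)
    (hg : Measurable g) (hgb : ∀ x, g x ∈ Icc c C) : |entropy ν g| ≤ 2 * M := by
  have h₁ : |∫ x, g x * log (g x) ∂ν| ≤ M := by
    simpa using norm_integral_le_of_norm_le_const (μ := ν) (f := fun x => g x * log (g x))
      (.of_forall fun x => hM _ (hgb x))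
  have h₂ : |(∫ x, g x ∂ν) * log (∫ x, g x ∂ν)| ≤ M := hM _ (integral_mem_Icc hg hgb)
  unfold entropy
  linarith [abs_sub (∫ x, g x * log (g x) ∂ν) ((∫ x, g x ∂ν) * log (∫ x, g x ∂ν))]

lemma entropy_eq_integral_mul_log_sub [IsFiniteMeasure ν] (hg : Measurable g)
    (hgb : ∀ x, g x ∈ Icc c C) :
    entropy ν g = ∫ x, g x * (log (g x) - log (∫ y, g y ∂ν)) ∂ν := by
  have hgi : Integrable g ν := .of_mem_Icc c C hg.aemeasurable (.of_forall hgb)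
  simp_rw [mul_sub]
  rw [integral_sub (integrable_comp_of_mem_Icc continuous_mul_log hg hgb) (hgi.mul_const _),
    integral_mul_const, entropy]

lemma integral_mul_le_entropy [IsProbabilityMeasure ν] (hc : 0 < c) (hg : Measurable g)
    (hgb : ∀ x, g x ∈ Icc c C) {u : α → ℝ} (hgu : Integrable (fun x => g x * u x) ν)
    (heu : Integrable (fun x => exp (u x)) ν) (heu_le : ∫ x, exp (u x) ∂ν ≤ 1) :
    ∫ x, g x * u x ∂ν ≤ entropy ν g := by
  set G := ∫ x, g x ∂ν
  have hG : 0 < G := hc.trans_le (integral_mem_Icc hg hgb).1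
  have hgi : Integrable g ν := .of_mem_Icc c C hg.aemeasurable (.of_forall hgb)
  have hgl : Integrable (fun x => g x * (log (g x) - log G)) ν := by
    simp_rw [mul_sub]
    exact (integrable_comp_of_mem_Icc continuous_mul_log hg hgb).sub (hgi.mul_const _)
  calc ∫ x, g x * u x ∂ν
      ≤ ∫ x, (g x * (log (g x) - log G) - g x + G * exp (u x)) ∂ν :=
        integral_mono hgu ((hgl.sub hgi).add (heu.const_mul G)) fun x =>
          mul_le_mul_log_sub_sub_add_exp (hc.trans_le (hgb x).1) hG (u x)
    _ = entropy ν g - G + G * ∫ x, exp (u x) ∂ν := by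
        rw [integral_add (f := fun x => g x * (log (g x) - log G) - g x) (hgl.sub hgi)
          (heu.const_mul G), integral_sub hgl hgi, integral_const_mul,
          entropy_eq_integral_mul_log_sub hg hgb]
    _ ≤ entropy ν g := by nlinarith

end Entropy

section Product

variable {α β : Type*} [MeasurableSpace α] [MeasurableSpace β] {ν : Measure α} {ρ : Measure β}
  {H : β × α → ℝ} {c C : ℝ}

lemma measurable_integral_slice [SFinite ν] (hH : Measurable H) :
    Measurable fun b => ∫ a, H (b, a) ∂ν :=
  hH.stronglyMeasurable.integral_prod_right'.measurable

lemma measurable_entropy_slice [SFinite ν] (hH : Measurable H) :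
    Measurable fun b => entropy ν (fun a => H (b, a)) :=
  (measurable_integral_slice (hH.mul hH.log)).sub
    ((measurable_integral_slice hH).mul (measurable_integral_slice hH).log)

lemma integrable_entropy_slice [IsProbabilityMeasure ν] [IsFiniteMeasure ρ] (hH : Measurable H)
    (hHb : ∀ p, H p ∈ Icc c C) : Integrable (fun b => entropy ν (fun a => H (b, a))) ρ := by
  obtain ⟨M, hM⟩ := isCompact_Icc.exists_bound_of_continuousOn (s := Icc c C)
    continuous_mul_log.continuousOn
  exact .of_bound (measurable_entropy_slice hH).aestronglyMeasurable (2 * M)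
    (.of_forall fun b => abs_entropy_le hM (hH.comp measurable_prodMk_left) fun a => hHb _)

variable [IsProbabilityMeasure ν]

lemma entropy_prod [IsFiniteMeasure ρ] (hH : Measurable H) (hHb : ∀ p, H p ∈ Icc c C) :
    entropy (ρ.prod ν) H =
      ∫ b, entropy ν (fun a => H (b, a)) ∂ρ + entropy ρ (fun b => ∫ a, H (b, a) ∂ν) := by
  set G := fun b => ∫ a, H (b, a) ∂ν
  have hG := measurable_integral_slice (ν := ν) hH
  have hGb (b : β) : G b ∈ Icc c C :=
    integral_mem_Icc (hH.comp measurable_prodMk_left) fun a => hHb _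
  have hHl := integrable_comp_of_mem_Icc (ν := ρ.prod ν) continuous_mul_log hH hHb
  have hHi : Integrable H (ρ.prod ν) := .of_mem_Icc c C hH.aemeasurable (.of_forall hHb)
  have hslice : ∫ b, entropy ν (fun a => H (b, a)) ∂ρ =
      ∫ b, ∫ a, H (b, a) * log (H (b, a)) ∂ν ∂ρ - ∫ b, G b * log (G b) ∂ρ :=
    integral_sub hHl.integral_prod_left (integrable_comp_of_mem_Icc continuous_mul_log hG hGb)
  rw [entropy, entropy, hslice, integral_prod _ hHl, integral_prod _ hHi]
  ring

lemma entropy_integral_le [IsProbabilityMeasure ρ] (hc : 0 < c) (hH : Measurable H)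
    (hHb : ∀ p, H p ∈ Icc c C) :
    entropy ρ (fun b => ∫ a, H (b, a) ∂ν) ≤ ∫ a, entropy ρ (fun b => H (b, a)) ∂ν := by
  set G := fun b => ∫ a, H (b, a) ∂ν
  have hG := measurable_integral_slice (ν := ν) hH
  have hGb (b : β) : G b ∈ Icc c C :=
    integral_mem_Icc (hH.comp measurable_prodMk_left) fun a => hHb _
  set T := ∫ b, G b ∂ρ
  have hT : T ∈ Icc c C := integral_mem_Icc hG hGb
  -- `u = log (G / ∫ G)` attains equality in `integral_mul_le_entropy` for `G` itself
  set u := fun b => log (G b) - log T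
  have hu : Measurable u := hG.log.sub measurable_const
  have hub (b : β) : ‖u b‖ ≤ log C - log c := abs_log_sub_log_le hc (hGb b) hT
  have hexp (b : β) : exp (u b) = G b / T := by
    rw [exp_sub, exp_log (hc.trans_le (hGb b).1), exp_log (hc.trans_le hT.1)]
  have hHu : Integrable (fun p : β × α => H p * u p.1) (ρ.prod ν) :=
    (Integrable.of_mem_Icc c C hH.aemeasurable (.of_forall hHb)).mul_bdd
      (hu.comp measurable_fst).aestronglyMeasurable (.of_forall fun p => hub p.1)
  have hGi : Integrable G ρ := .of_mem_Icc c C hG.aemeasurable (.of_forall hGb)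
  have hdual (a : α) : ∫ b, H (b, a) * u b ∂ρ ≤ entropy ρ (fun b => H (b, a)) := by
    have hHa : Measurable fun b => H (b, a) := hH.comp measurable_prodMk_right
    refine integral_mul_le_entropy hc hHa (fun b => hHb _)
      ((Integrable.of_mem_Icc c C hHa.aemeasurable (.of_forall fun b => hHb _)).mul_bdd
        hu.aestronglyMeasurable (.of_forall hub)) ?_ ?_
    · simpa only [hexp] using hGi.div_const T
    · simp_rw [hexp, integral_div]
      exact (div_self (hc.trans_le hT.1).ne').le
  calc entropy ρ G = ∫ b, G b * u b ∂ρ := entropy_eq_integral_mul_log_sub hG hGb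
    _ = ∫ b, ∫ a, H (b, a) * u b ∂ν ∂ρ := by simp_rw [G, ← integral_mul_const]
    _ = ∫ a, ∫ b, H (b, a) * u b ∂ρ ∂ν := integral_integral_swap hHu
    _ ≤ ∫ a, entropy ρ (fun b => H (b, a)) ∂ν :=
        integral_mono hHu.integral_prod_right
          (integrable_entropy_slice (hH.comp measurable_swap) fun p => hHb _) hdual

end Product

lemma entropy_comp_measurePreserving {α β : Type*} [MeasurableSpace α] [MeasurableSpace β]
    {ν : Measure α} {ρ : Measure β} {e : α ≃ᵐ β} (he : MeasurePreserving e ν ρ) (g : β → ℝ) :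
    entropy ν (fun x => g (e x)) = entropy ρ g := by
  simp only [entropy, he.integral_comp' (fun y => g y * log (g y)), he.integral_comp' g]

lemma integral_pi_eq_integral_integral_insertNth {m : ℕ} {Ω : Fin (m + 1) → Type*}
    [∀ k, MeasurableSpace (Ω k)] (μ : ∀ k, Measure (Ω k)) [∀ k, SigmaFinite (μ k)]
    (i : Fin (m + 1)) {Φ : (∀ k, Ω k) → ℝ} (hΦ : Integrable Φ (Measure.pi μ)) :
    ∫ x, Φ x ∂Measure.pi μ =
      ∫ w, ∫ r, Φ (i.insertNth w r) ∂Measure.pi (fun j => μ (i.succAbove j)) ∂μ i := by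
  have he := (measurePreserving_piFinSuccAbove μ i).symm (MeasurableEquiv.piFinSuccAbove Ω i)
  rw [← he.integral_comp' Φ]
  exact integral_prod _ ((he.integrable_comp hΦ.aestronglyMeasurable).2 hΦ)

lemma entropy_marginal_le {m : ℕ} {Ω : Fin (m + 1) → Type*} [∀ k, MeasurableSpace (Ω k)]
    (μ : ∀ k, Measure (Ω k)) [∀ k, IsProbabilityMeasure (μ k)] (i : Fin (m + 1))
    {g : (∀ k, Ω k) → ℝ} {c C : ℝ} (hc : 0 < c) (hg : Measurable g) (hgb : ∀ x, g x ∈ Icc c C) :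
    entropy (μ i) (fun w => ∫ r, g (i.insertNth w r) ∂Measure.pi fun j => μ (i.succAbove j)) ≤
      ∫ x, entropy (μ i) (fun y => g (Function.update x i y)) ∂Measure.pi μ := by
  have hH : Measurable fun p : Ω i × (∀ j, Ω (i.succAbove j)) => g (i.insertNth p.1 p.2) :=
    hg.comp (MeasurableEquiv.piFinSuccAbove Ω i).symm.measurable
  have hΦ : Integrable (fun x => entropy (μ i) fun y => g (Function.update x i y)) (Measure.pi μ) :=
    integrable_entropy_slice (hg.comp measurable_update') fun _ => hgb _
  refine (entropy_integral_le hc hH fun p => hgb _).trans_eq ?_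
  rw [integral_pi_eq_integral_integral_insertNth μ i hΦ]
  simp only [Fin.update_insertNth, integral_const, probReal_univ, one_smul]

/-- Split off coordinate `0`: the chain rule `entropy_prod` leaves the entropies of the slices,
bounded by induction, and the entropy of the marginal, bounded by convexity. -/
theorem entropy_pi_le_sum {n : ℕ} {Ω : Fin n → Type*} [∀ k, MeasurableSpace (Ω k)]
    (μ : ∀ k, Measure (Ω k)) [∀ k, IsProbabilityMeasure (μ k)] {g : (∀ k, Ω k) → ℝ} {c C : ℝ}
    (hc : 0 < c) (hg : Measurable g) (hgb : ∀ x, g x ∈ Icc c C) :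
    entropy (Measure.pi μ) g ≤
      ∑ k, ∫ x, entropy (μ k) (fun y => g (Function.update x k y)) ∂Measure.pi μ := by
  induction n with
  | zero =>
    have hconst : g = fun _ => g default := funext fun x => congrArg g (Subsingleton.elim _ _)
    rw [hconst, entropy_const]
    simp
  | succ m ih =>
    set Φ := fun k x => entropy (μ k) (fun y => g (Function.update x k y))
    have hΦ (k : Fin (m + 1)) : Integrable (Φ k) (Measure.pi μ) :=
      integrable_entropy_slice (hg.comp measurable_update') fun _ => hgb _
    set π' := Measure.pi fun j => μ ((0 : Fin (m + 1)).succAbove j)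
    have he := (measurePreserving_piFinSuccAbove μ 0).symm (MeasurableEquiv.piFinSuccAbove Ω 0)
    set H : Ω 0 × (∀ j, Ω ((0 : Fin (m + 1)).succAbove j)) → ℝ :=
      fun p => g (Fin.insertNth 0 p.1 p.2)
    have hH : Measurable H := hg.comp (MeasurableEquiv.piFinSuccAbove Ω 0).symm.measurable
    have hHb (p) : H p ∈ Icc c C := hgb _
    have hΦH (k : Fin (m + 1)) :
        Integrable (fun p : Ω 0 × _ => Φ k (Fin.insertNth 0 p.1 p.2)) ((μ 0).prod π') :=
      (he.integrable_comp (hΦ k).aestronglyMeasurable).2 (hΦ k)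
    have hslices : ∫ w, entropy π' (fun r => H (w, r)) ∂μ 0 ≤
        ∑ j, ∫ x, Φ ((0 : Fin (m + 1)).succAbove j) x ∂Measure.pi μ := by
      simp_rw [integral_pi_eq_integral_integral_insertNth μ 0 (hΦ _)]
      rw [← integral_finsetSum _ fun j _ => (hΦH _).integral_prod_left]
      refine integral_mono (integrable_entropy_slice hH hHb)
        (integrable_finsetSum _ fun j _ => (hΦH _).integral_prod_left) fun w => ?_
      refine (ih _ (hH.comp measurable_prodMk_left) fun r => hHb _).trans_eq ?_
      simp only [H, Φ, Function.comp_apply, Fin.insertNth_update]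
      rfl
    have hmarginal := entropy_marginal_le μ 0 hc hg hgb
    have hent : entropy (Measure.pi μ) g = entropy ((μ 0).prod π') H :=
      (entropy_comp_measurePreserving he g).symm
    rw [hent, entropy_prod hH hHb, Fin.sum_univ_succAbove _ 0]
    linarith

section Update

variable {ι : Type*} [Fintype ι] [DecidableEq ι] {Ω : ι → Type*} [∀ i, MeasurableSpace (Ω i)]
  (μ : ∀ i, Measure (Ω i)) [∀ i, IsProbabilityMeasure (μ i)]

lemma measurePreserving_update (k : ι) :
    MeasurePreserving (fun p : (∀ i, Ω i) × Ω k => Function.update p.1 k p.2)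
      ((Measure.pi μ).prod (μ k)) (Measure.pi μ) := by
  refine ⟨measurable_update', (Measure.pi_eq fun s hs => ?_).symm⟩
  have hpre : (fun p : (∀ i, Ω i) × Ω k => Function.update p.1 k p.2) ⁻¹' univ.pi s =
      univ.pi (Function.update s k univ) ×ˢ s k := by
    ext ⟨x, y⟩
    simp only [mem_preimage, mem_univ_pi, mem_prod]
    constructor
    · intro h
      refine ⟨fun i => ?_, by simpa using h k⟩
      rcases eq_or_ne i k with rfl | hi
      · simp
      · simpa [hi] using h i
    · rintro ⟨hx, hy⟩ i
      rcases eq_or_ne i k with rfl | hi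
      · simpa using hy
      · simpa [hi] using hx i
  rw [Measure.map_apply measurable_update' (.univ_pi hs), hpre, Measure.prod_prod, Measure.pi_pi,
    ← Finset.mul_prod_erase _ _ (Finset.mem_univ k),
    ← Finset.mul_prod_erase _ _ (Finset.mem_univ k)]
  simp only [Function.update_self, measure_univ, one_mul, mul_comm]
  congr 1
  exact Finset.prod_congr rfl fun i hi => by rw [Function.update_of_ne (Finset.ne_of_mem_erase hi)]

lemma integral_integral_update {φ : (∀ i, Ω i) → ℝ} (hφ : Integrable φ (Measure.pi μ)) (k : ι) :
    ∫ x, ∫ y, φ (Function.update x k y) ∂μ k ∂Measure.pi μ = ∫ x, φ x ∂Measure.pi μ := by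
  have hup := measurePreserving_update μ k
  calc ∫ x, ∫ y, φ (Function.update x k y) ∂μ k ∂Measure.pi μ
      = ∫ p, φ (Function.update p.1 k p.2) ∂(Measure.pi μ).prod (μ k) :=
        (integral_prod _ ((hup.integrable_comp hφ.aestronglyMeasurable).2 hφ)).symm
    _ = ∫ x, φ x ∂Measure.map (fun p : (∀ i, Ω i) × Ω k => Function.update p.1 k p.2)
          ((Measure.pi μ).prod (μ k)) :=
        (integral_map hup.measurable.aemeasurable
          (by rw [hup.map_eq]; exact hφ.aestronglyMeasurable)).symm
    _ = ∫ x, φ x ∂Measure.pi μ := by rw [hup.map_eq]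

end Update

section CumulantGeneratingFunction

open Topology

variable {α : Type*} [MeasurableSpace α] {ν : Measure α} {X : α → ℝ} {a b : ℝ}

lemma interior_integrableExpSet_of_mem_Icc [IsFiniteMeasure ν] (hm : AEMeasurable X ν)
    (hb : ∀ᵐ x ∂ν, X x ∈ Icc a b) (t : ℝ) : t ∈ interior (integrableExpSet X ν) := by
  simp [integrableExpSet, integrable_exp_mul_of_mem_Icc hm hb]

lemma canEntropy_eq_deriv_cgf [IsFiniteMeasure ν] (hm : AEMeasurable X ν)
    (hb : ∀ᵐ x ∂ν, X x ∈ Icc a b) (s : ℝ) :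
    canEntropy ν X s = s * deriv (cgf X ν) s - cgf X ν s := by
  rw [deriv_cgf (interior_integrableExpSet_of_mem_Icc hm hb s)]
  rfl

variable [IsProbabilityMeasure ν]

lemma entropy_exp_mul_eq {s : ℝ} (hX : Integrable (fun x => exp (s * X x)) ν) :
    entropy ν (fun x => exp (s * X x)) = mgf X ν s * canEntropy ν X s := by
  have hZ : mgf X ν s ≠ 0 := (mgf_pos hX).ne'
  have hlog (x : α) : exp (s * X x) * log (exp (s * X x)) = s * (X x * exp (s * X x)) := by
    rw [log_exp]; ring
  simp only [entropy, canEntropy, thermalExp, mgf, hlog, integral_const_mul] at hZ ⊢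
  field_simp

/-- Hoeffding's lemma in entropy form: `ψ''(u)` is the variance of `X` under the tilted measure,
hence lies in `[0, (b - a)² / 4]`, and `u ↦ u ψ'(u) - ψ(u)` has derivative `u ψ''(u)`. -/
lemma canEntropy_mem_Icc (hm : AEMeasurable X ν) (hb : ∀ᵐ x ∂ν, X x ∈ Icc a b) {s : ℝ}
    (hs : 0 ≤ s) : canEntropy ν X s ∈ Icc 0 (s ^ 2 * (b - a) ^ 2 / 8) := by
  have hI := interior_integrableExpSet_of_mem_Icc hm hb
  have hψ (u : ℝ) : HasDerivAt (cgf X ν) (deriv (cgf X ν) u) u :=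
    (analyticAt_cgf (hI u)).differentiableAt.hasDerivAt
  have hψ' (u : ℝ) : HasDerivAt (deriv (cgf X ν)) Var[X; ν.tilted (u * X ·)] u := by
    rw [variance_tilted_mul (hI u), iteratedDeriv_succ, iteratedDeriv_one]
    exact (analyticAt_cgf (hI u)).deriv.differentiableAt.hasDerivAt
  have hvar (u : ℝ) : Var[X; ν.tilted (u * X ·)] ∈ Icc 0 ((b - a) ^ 2 / 4) := by
    have := isProbabilityMeasure_tilted (integrable_exp_mul_of_mem_Icc (t := u) hm hb)
    have hac := tilted_absolutelyContinuous ν (u * X ·)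
    refine ⟨variance_nonneg _ _, ?_⟩
    exact (variance_le_sq_of_bounded (hac hb) (hm.mono_ac hac)).trans_eq (by ring)
  set η := fun u => u * deriv (cgf X ν) u - cgf X ν u
  have hη (u : ℝ) : HasDerivAt η (u * Var[X; ν.tilted (u * X ·)]) u :=
    (((hasDerivAt_id' u).mul (hψ' u)).sub (hψ u)).congr_deriv (by ring)
  have hη₀ : η 0 = 0 := by simp [η]
  rw [canEntropy_eq_deriv_cgf hm hb]
  constructor
  · have hmono : MonotoneOn η (Ici 0) :=
      monotoneOn_of_deriv_nonneg (convex_Ici 0) (fun u _ => (hη u).continuousAt.continuousWithinAt)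
        (fun u _ => (hη u).differentiableAt.differentiableWithinAt) fun u hu => by
          rw [interior_Ici] at hu
          rw [(hη u).deriv]
          exact mul_nonneg (le_of_lt hu) (hvar u).1
    simpa [hη₀, η] using hmono self_mem_Ici hs hs
  · have hη' (u : ℝ) : HasDerivAt (fun u => η u - u ^ 2 * (b - a) ^ 2 / 8)
        (u * Var[X; ν.tilted (u * X ·)] - u * (b - a) ^ 2 / 4) u :=
      ((hη u).sub (((hasDerivAt_pow 2 u).mul_const ((b - a) ^ 2)).div_const 8)).congr_deriv
        (by ring)
    have hanti : AntitoneOn (fun u => η u - u ^ 2 * (b - a) ^ 2 / 8) (Ici 0) :=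
      antitoneOn_of_deriv_nonpos (convex_Ici 0)
        (fun u _ => (hη' u).continuousAt.continuousWithinAt)
        (fun u _ => (hη' u).differentiableAt.differentiableWithinAt) fun u hu => by
          rw [interior_Ici] at hu
          rw [(hη' u).deriv]
          nlinarith [mul_le_mul_of_nonneg_left (hvar u).2 (le_of_lt hu)]
    have := hanti self_mem_Ici hs hs
    simp only [hη₀] at this
    linarith

/-- The Herbst argument: `u ↦ ψ(u) / u - u c / 8` has derivative `(S(u) - u² c / 8) / u²`, so it
is antitone, and it tends to `ψ'(0) = E[X]` at `0`. -/
lemma cgf_le_of_canEntropy_le (hm : AEMeasurable X ν) (hb : ∀ᵐ x ∂ν, X x ∈ Icc a b) {c β : ℝ}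
    (hβ : 0 < β) (hS : ∀ s ∈ Ioc 0 β, canEntropy ν X s ≤ s ^ 2 * c / 8) :
    cgf X ν β ≤ β * ν[X] + β ^ 2 * c / 8 := by
  have hI := interior_integrableExpSet_of_mem_Icc hm hb
  have hψ (u : ℝ) : HasDerivAt (cgf X ν) (deriv (cgf X ν) u) u :=
    (analyticAt_cgf (hI u)).differentiableAt.hasDerivAt
  set Q := fun u => cgf X ν u / u - u * c / 8
  have hQ {u : ℝ} (hu : u ≠ 0) :
      HasDerivAt Q ((deriv (cgf X ν) u * u - cgf X ν u * 1) / u ^ 2 - c / 8) u :=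
    HasDerivAt.congr_deriv
      (((hψ u).div (hasDerivAt_id' u) hu).sub (((hasDerivAt_id' u).mul_const c).div_const 8))
      (by ring)
  have hanti : AntitoneOn Q (Ioc 0 β) :=
    antitoneOn_of_deriv_nonpos (convex_Ioc 0 β)
      (fun u hu => (hQ hu.1.ne').continuousAt.continuousWithinAt)
      (fun u hu => (hQ (interior_subset hu).1.ne').differentiableAt.differentiableWithinAt)
      fun u hu => by
        rw [interior_Ioc] at hu
        have hS' := hS u (Ioo_subset_Ioc_self hu)
        rw [canEntropy_eq_deriv_cgf hm hb] at hS'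
        rw [(hQ hu.1.ne').deriv, sub_nonpos, div_le_iff₀ (pow_pos hu.1 2)]
        linarith
  have hslope : Tendsto (fun u => cgf X ν u / u) (𝓝[>] 0) (𝓝 ν[X]) := by
    have h := (hasDerivAt_iff_tendsto_slope_zero.1 (hψ 0)).mono_left
      (nhdsWithin_mono _ fun u (hu : u ∈ Ioi 0) => ne_of_gt hu)
    simpa [deriv_cgf_zero (hI 0), div_eq_inv_mul] using h
  have hlim : Tendsto Q (𝓝[>] 0) (𝓝 (ν[X] - 0 * c / 8)) :=
    hslope.sub ((continuous_id.mul continuous_const).div_const 8).continuousWithinAt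
  have hQβ : Q β ≤ ν[X] := by
    simpa using ge_of_tendsto hlim (eventually_of_mem (Ioc_mem_nhdsGT hβ) fun u hu =>
      hanti hu (right_mem_Ioc.2 hβ) hu.2)
  simp only [Q] at hQβ
  rw [sub_le_iff_le_add, div_le_iff₀ hβ] at hQβ
  nlinarith

lemma thermalExp_le_of_ae_le {s c : ℝ} {h : α → ℝ} (hX : Integrable (fun x => exp (s * X x)) ν)
    (hh : Integrable (fun x => h x * exp (s * X x)) ν) (hle : ∀ᵐ x ∂ν, h x ≤ c) :
    thermalExp ν s X h ≤ c := by
  rw [thermalExp, div_le_iff₀ (show 0 < ∫ x, exp (s * X x) ∂ν from mgf_pos hX)]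
  calc ∫ x, h x * exp (s * X x) ∂ν ≤ ∫ x, c * exp (s * X x) ∂ν :=
        integral_mono_ae hh (hX.const_mul c)
          (hle.mono fun x hx => mul_le_mul_of_nonneg_right hx (exp_pos _).le)
    _ = c * mgf X ν s := integral_const_mul _ _

lemma measureReal_ge_le_of_canEntropy_le (hm : AEMeasurable X ν) (hb : ∀ᵐ x ∂ν, X x ∈ Icc a b)
    {c t : ℝ} (hc : 0 < c) (ht : 0 < t) (hS : ∀ s, 0 < s → canEntropy ν X s ≤ s ^ 2 * c / 8) :
    ν.real {x | ν[X] + t ≤ X x} ≤ exp (-2 * t ^ 2 / c) := by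
  -- the minimizer of `-β t + β² c / 8`
  set β := 4 * t / c
  have hβ : 0 < β := by positivity
  have hint := integrable_exp_mul_of_mem_Icc (t := β) hm hb
  have hcgf := cgf_le_of_canEntropy_le hm hb hβ fun s hs => hS s hs.1
  calc ν.real {x | ν[X] + t ≤ X x} ≤ exp (-β * (ν[X] + t)) * mgf X ν β :=
        measure_ge_le_exp_mul_mgf _ hβ.le hint
    _ = exp (-β * (ν[X] + t) + cgf X ν β) := by rw [exp_add, exp_cgf hint]
    _ ≤ exp (-β * t + β ^ 2 * c / 8) := exp_le_exp.2 (by linarith)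
    _ = exp (-2 * t ^ 2 / c) := by
        congr 1
        simp only [β]
        field_simp
        ring

end CumulantGeneratingFunction

section ProductSpace

variable {n : ℕ} {Ω : Fin n → Type*} {f : (∀ i, Ω i) → ℝ} {C : ℝ}

lemma update_mem_Icc_condInfK_condSupK (hC : ∀ x, |f x| ≤ C) (k : Fin n) (x : ∀ i, Ω i)
    (y : Ω k) : f (Function.update x k y) ∈ Icc (condInfK k f x) (condSupK k f x) :=
  ⟨ciInf_le (f := fun z => f (Function.update x k z))
      ⟨-C, by rintro _ ⟨z, rfl⟩; exact neg_le_of_abs_le (hC _)⟩ y,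
    le_ciSup (f := fun z => f (Function.update x k z))
      ⟨C, by rintro _ ⟨z, rfl⟩; exact le_of_abs_le (hC _)⟩ y⟩

lemma condSupK_sub_condInfK_mem_Icc (hC : ∀ x, |f x| ≤ C) (k : Fin n) (x : ∀ i, Ω i) :
    condSupK k f x - condInfK k f x ∈ Icc 0 (2 * C) := by
  have : Nonempty (Ω k) := ⟨x k⟩
  have hx := update_mem_Icc_condInfK_condSupK hC k x (x k)
  have hsup : condSupK k f x ≤ C := ciSup_le fun y => le_of_abs_le (hC _)
  have hinf : -C ≤ condInfK k f x := le_ciInf fun y => neg_le_of_abs_le (hC _)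
  constructor <;> linarith [hx.1, hx.2]

lemma sum_sq_condSupK_sub_condInfK_le (hC : ∀ x, |f x| ≤ C) (x : ∀ i, Ω i) :
    ∑ k, (condSupK k f x - condInfK k f x) ^ 2 ≤ n * (2 * C) ^ 2 := by
  have h (k : Fin n) := condSupK_sub_condInfK_mem_Icc hC k x
  simpa using Finset.sum_le_sum (s := Finset.univ) fun k _ => pow_le_pow_left₀ (h k).1 (h k).2 2

lemma exp_mul_mem_Icc (hC : ∀ x, |f x| ≤ C) {s : ℝ} (hs : 0 ≤ s) (x : ∀ i, Ω i) :
    exp (s * f x) ∈ Icc (exp (-(s * C))) (exp (s * C)) := by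
  obtain ⟨h₁, h₂⟩ := abs_le.1 (hC x)
  constructor <;> exact exp_le_exp.2 (by nlinarith)

section Thermodynamics

variable [∀ k, MeasurableSpace (Ω k)] (μ : ∀ k, Measure (Ω k)) {s : ℝ}

lemma condEntropyK_update (k : Fin n) (x : ∀ i, Ω i) (y : Ω k) :
    condEntropyK μ k f s (Function.update x k y) = condEntropyK μ k f s x := by
  simp only [condEntropyK, condThermalExpK, Function.update_idem]

variable [∀ k, IsProbabilityMeasure (μ k)]

lemma condEntropyK_mem_Icc (hf : Measurable f) (hC : ∀ x, |f x| ≤ C) (hs : 0 ≤ s) (k : Fin n)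
    (x : ∀ i, Ω i) :
    condEntropyK μ k f s x ∈ Icc 0 (s ^ 2 * (condSupK k f x - condInfK k f x) ^ 2 / 8) :=
  canEntropy_mem_Icc (hf.comp (measurable_update x)).aemeasurable
    (.of_forall (update_mem_Icc_condInfK_condSupK hC k x)) hs

lemma measurable_condEntropyK (hf : Measurable f) (k : Fin n) :
    Measurable (condEntropyK μ k f s) := by
  have hint {φ : (∀ i, Ω i) → ℝ} (hφ : Measurable φ) :
      Measurable fun x => ∫ y, φ (Function.update x k y) ∂μ k :=
    measurable_integral_slice (hφ.comp measurable_update')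
  have hZ := hint (hf.const_mul s).exp
  exact ((hint (hf.mul (hf.const_mul s).exp)).div hZ).const_mul s |>.sub hZ.log

lemma integrable_condEntropyK_mul_exp (hf : Measurable f) (hC : ∀ x, |f x| ≤ C) (hs : 0 ≤ s)
    (k : Fin n) : Integrable (fun x => condEntropyK μ k f s x * exp (s * f x)) (Measure.pi μ) := by
  refine (Integrable.of_mem_Icc 0 (s ^ 2 * (2 * C) ^ 2 / 8)
    (measurable_condEntropyK μ hf k).aemeasurable (.of_forall fun x => ?_)).mul_bdd
    (c := exp (s * C)) (hf.const_mul s).exp.aestronglyMeasurable (.of_forall fun x => ?_)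
  · have hS := condEntropyK_mem_Icc μ hf hC hs k x
    have hR := condSupK_sub_condInfK_mem_Icc hC k x
    refine ⟨hS.1, hS.2.trans ?_⟩
    gcongr
    exacts [hR.1, hR.2]
  · rw [Real.norm_eq_abs, abs_of_pos (exp_pos _)]
    exact (exp_mul_mem_Icc hC hs x).2

/-- Tensorize `Ent(e^{s f})`: the `k`-th term is `E[E_k[e^{s f}] S_k]`, and as `S_k` does not
depend on the `k`-th coordinate, this is `E[e^{s f} S_k]`. -/
theorem canEntropy_pi_le (hf : Measurable f) (hC : ∀ x, |f x| ≤ C) (hs : 0 ≤ s) :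
    canEntropy (Measure.pi μ) f s ≤
      thermalExp (Measure.pi μ) s f (fun x => ∑ k, condEntropyK μ k f s x) := by
  set P := Measure.pi μ
  have hfb (x : ∀ i, Ω i) : f x ∈ Icc (-C) C := abs_le.1 (hC x)
  have hg : Measurable fun x => exp (s * f x) := (hf.const_mul s).exp
  have hSg := integrable_condEntropyK_mul_exp μ hf hC hs
  have hslice (k : Fin n) (x : ∀ i, Ω i) :
      entropy (μ k) (fun y => exp (s * f (Function.update x k y))) =
        ∫ y, condEntropyK μ k f s (Function.update x k y) *
          exp (s * f (Function.update x k y)) ∂μ k := by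
    rw [entropy_exp_mul_eq (X := fun y => f (Function.update x k y))
      (integrable_exp_mul_of_mem_Icc (hf.comp (measurable_update x)).aemeasurable
        (.of_forall fun y => hfb _)), mgf, mul_comm, ← integral_const_mul]
    simp only [condEntropyK_update]
    rfl
  have hint : Integrable (fun x => exp (s * f x)) P :=
    integrable_exp_mul_of_mem_Icc hf.aemeasurable (.of_forall hfb)
  rw [thermalExp, le_div_iff₀ (show 0 < ∫ x, exp (s * f x) ∂P from mgf_pos hint), mul_comm]
  calc mgf f P s * canEntropy P f s = entropy P fun x => exp (s * f x) :=
        (entropy_exp_mul_eq hint).symm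
    _ ≤ ∑ k, ∫ x, entropy (μ k) (fun y => exp (s * f (Function.update x k y))) ∂P :=
        entropy_pi_le_sum μ (exp_pos _) hg (exp_mul_mem_Icc hC hs)
    _ = ∑ k, ∫ x, condEntropyK μ k f s x * exp (s * f x) ∂P := by
        simp_rw [hslice]
        exact Finset.sum_congr rfl fun k _ => integral_integral_update μ (hSg k) k
    _ = ∫ x, (∑ k, condEntropyK μ k f s x) * exp (s * f x) ∂P := by
        simp_rw [Finset.sum_mul]
        exact (integral_finsetSum _ fun k _ => hSg k).symm

theorem measureReal_ge_le_of_ae_sum_sq_le (hf : Measurable f) (hC : ∀ x, |f x| ≤ C) {c t : ℝ}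
    (hc : 0 < c) (ht : 0 < t)
    (hR : ∀ᵐ x ∂Measure.pi μ, ∑ k, (condSupK k f x - condInfK k f x) ^ 2 ≤ c) :
    (Measure.pi μ).real {x | ∫ y, f y ∂Measure.pi μ + t ≤ f x} ≤ exp (-2 * t ^ 2 / c) := by
  have hfb (x : ∀ i, Ω i) : f x ∈ Icc (-C) C := abs_le.1 (hC x)
  refine measureReal_ge_le_of_canEntropy_le hf.aemeasurable (.of_forall hfb) hc ht fun s hs => ?_
  refine (canEntropy_pi_le μ hf hC hs.le).trans (thermalExp_le_of_ae_le
    (integrable_exp_mul_of_mem_Icc hf.aemeasurable (.of_forall hfb)) ?_ ?_)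
  · simp_rw [Finset.sum_mul]
    exact integrable_finsetSum _ fun k _ => integrable_condEntropyK_mul_exp μ hf hC hs.le k
  · filter_upwards [hR] with x hx
    calc ∑ k, condEntropyK μ k f s x
        ≤ ∑ k, s ^ 2 * (condSupK k f x - condInfK k f x) ^ 2 / 8 :=
          Finset.sum_le_sum fun k _ => (condEntropyK_mem_Icc μ hf hC hs.le k x).2
      _ = s ^ 2 / 8 * ∑ k, (condSupK k f x - condInfK k f x) ^ 2 := by
          rw [Finset.mul_sum]
          exact Finset.sum_congr rfl fun k _ => by ring
      _ ≤ s ^ 2 * c / 8 := by nlinarith [sq_nonneg s]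

end Thermodynamics

end ProductSpace

end BoundedDifference

section Statements

variable {n : ℕ} {Ω : Fin n → Type*} [∀ k, MeasurableSpace (Ω k)]

/-- Bounded difference inequality (strong form). -/
theorem stmt_9 (μ : ∀ k, Measure (Ω k)) [∀ k, IsProbabilityMeasure (μ k)]
    (f : (∀ i, Ω i) → ℝ) (hf : Measurable f) (C : ℝ) (hC : ∀ x, |f x| ≤ C)
    (t : ℝ) (ht : 0 < t) :
    ((Measure.pi μ) {x | f x - ∫ y, f y ∂(Measure.pi μ) > t}).toReal
      ≤ Real.exp (-2 * t ^ 2 /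
          essSup (fun x => ∑ k, (condSupK k f x - condInfK k f x) ^ 2) (Measure.pi μ)) := by
  set R := essSup (fun x => ∑ k, (condSupK k f x - condInfK k f x) ^ 2) (Measure.pi μ)
  rw [← measureReal_def]
  rcases le_or_gt R 0 with hR | hR
  -- then the right side is at least `exp 0 = 1`, also for `R = 0` where `x / 0 = 0`
  · exact measureReal_le_one.trans (one_le_exp (div_nonneg_of_nonpos (by nlinarith) hR))
  have hbdd := isBoundedUnder_of_eventually_le (f := ae (Measure.pi μ))
    (.of_forall (BoundedDifference.sum_sq_condSupK_sub_condInfK_le hC))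
  refine (measureReal_mono fun x hx => ?_).trans
    (BoundedDifference.measureReal_ge_le_of_ae_sum_sq_le μ hf hC hR ht (ae_le_essSup hbdd))
  simp only [mem_ofPred_eq] at hx ⊢
  linarith

end Statements
end

section
/- For every k ∈ {1,…,n} and every x ∈ Ω, the function β ↦ E_{k,βf}[ (f − inf_k f)² ](x) is non-decreasing on ℝ. -/
/-!
On the fibre through `x`, write `F y = f (x_{y,k})` and `m = inf F`. Then
`E_{k,βf}[(f - inf_k f)²](x)` is the Gibbs average of `g = (F - m)²` under the weight `e^{βF}`,
and `g` is a nondecreasing function of `F` because `F ≥ m`. For `β₁ ≤ β₂`, the quantity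
`∫ g e^{β₂F} ∫ e^{β₁F} - ∫ g e^{β₁F} ∫ e^{β₂F}` is half the integral over `ν ⊗ ν` of
`(g y - g y') (e^{β₂ F y + β₁ F y'} - e^{β₁ F y + β₂ F y'})`, and both factors of this
integrand have the sign of `F y - F y'` (Chebyshev's correlation inequality).
-/

open MeasureTheory Real

theorem norm_exp_mul_le_of_abs_le {x C : ℝ} (hx : |x| ≤ C) (β : ℝ) :
    ‖exp (β * x)‖ ≤ exp (|β| * C) := by
  rw [norm_of_nonneg (exp_pos _).le, exp_le_exp]
  calc β * x ≤ |β| * |x| := (le_abs_self _).trans (abs_mul _ _).le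
    _ ≤ |β| * C := mul_le_mul_of_nonneg_left hx (abs_nonneg β)

section Correlation

variable {α : Type*} [MeasurableSpace α] {ν : Measure α}

theorem integral_mul_mul_integral_le_of_nonneg [SFinite ν] {g a b : α → ℝ}
    (hga : Integrable (fun y => g y * a y) ν) (hgb : Integrable (fun y => g y * b y) ν)
    (ha : Integrable a ν) (hb : Integrable b ν)
    (h : ∀ y y', 0 ≤ (g y - g y') * (a y * b y' - a y' * b y)) :
    (∫ y, g y * b y ∂ν) * ∫ y, a y ∂ν ≤ (∫ y, g y * a y ∂ν) * ∫ y, b y ∂ν := by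
  set H : α × α → ℝ := fun z => g z.1 * a z.1 * b z.2 - g z.1 * b z.1 * a z.2
  have hH : Integrable H (ν.prod ν) := (hga.mul_prod hb).sub (hgb.mul_prod ha)
  have hH_eq : ∫ z, H z ∂ν.prod ν =
      (∫ y, g y * a y ∂ν) * (∫ y, b y ∂ν) - (∫ y, g y * b y ∂ν) * ∫ y, a y ∂ν := by
    rw [integral_sub (hga.mul_prod hb) (hgb.mul_prod ha), integral_prod_mul (fun y => g y * a y) b,
      integral_prod_mul (fun y => g y * b y) a]
  have hsymm : 0 ≤ ∫ z, H z + H z.swap ∂ν.prod ν := integral_nonneg fun z =>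
    (h z.1 z.2).trans_eq (by simp only [H, Prod.fst_swap, Prod.snd_swap]; ring)
  rw [integral_add hH (hH.swap : Integrable (fun z => H z.swap) _), integral_prod_swap H,
    hH_eq] at hsymm
  linarith

variable [IsFiniteMeasure ν] [NeZero ν]

theorem monotone_thermalExp_of_le_of_le {F g : α → ℝ} (hF : Measurable F) {C : ℝ}
    (hFC : ∀ y, |F y| ≤ C) (hg : Integrable g ν) (hgF : ∀ y y', F y ≤ F y' → g y ≤ g y') :
    Monotone fun β => thermalExp ν β F g := by
  intro β₁ β₂ hβ
  have hexp (β : ℝ) : Integrable (fun y => exp (β * F y)) ν :=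
    .of_bound (by fun_prop) _ (.of_forall fun y => norm_exp_mul_le_of_abs_le (hFC y) β)
  have hgexp (β : ℝ) : Integrable (fun y => g y * exp (β * F y)) ν :=
    hg.mul_bdd (by fun_prop) (.of_forall fun y => norm_exp_mul_le_of_abs_le (hFC y) β)
  have hweight {s t : ℝ} (hst : s ≤ t) :
      exp (β₂ * s) * exp (β₁ * t) ≤ exp (β₂ * t) * exp (β₁ * s) := by
    rw [← exp_add, ← exp_add, exp_le_exp]
    nlinarith
  simp only [thermalExp]
  rw [div_le_div_iff₀ (integral_exp_pos (hexp β₁)) (integral_exp_pos (hexp β₂))]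
  refine integral_mul_mul_integral_le_of_nonneg (hgexp β₂) (hgexp β₁) (hexp β₂) (hexp β₁)
    fun y y' => ?_
  rcases le_total (F y') (F y) with h | h
  · exact mul_nonneg (sub_nonneg.2 (hgF _ _ h)) (sub_nonneg.2 (hweight h))
  · exact mul_nonneg_of_nonpos_of_nonpos (sub_nonpos.2 (hgF _ _ h)) (sub_nonpos.2 (hweight h))

end Correlation

section Fibre

variable {n : ℕ} {Ω : Fin n → Type*}

theorem condInfK_update (k : Fin n) (g : (∀ i, Ω i) → ℝ) (x : ∀ i, Ω i) (y : Ω k) :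
    condInfK k g (Function.update x k y) = condInfK k g x := by
  simp only [condInfK, Function.update_idem]

variable [∀ k, MeasurableSpace (Ω k)]

theorem condThermalExpK_eq_thermalExp (μ : ∀ k, Measure (Ω k)) (k : Fin n) (β : ℝ)
    (f g : (∀ i, Ω i) → ℝ) (x : ∀ i, Ω i) :
    condThermalExpK μ k β f g x =
      thermalExp (μ k) β (fun y => f (Function.update x k y))
        (fun y => g (Function.update x k y)) :=
  rfl

end Fibre

section Statements

variable {n : ℕ} {Ω : Fin n → Type*} [∀ k, MeasurableSpace (Ω k)]

/-- Monotonicity of `β ↦ E_{k,βf}[(f − inf_k f)²](x)`. -/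
theorem stmt_14 (μ : ∀ k, Measure (Ω k)) [∀ k, IsProbabilityMeasure (μ k)]
    (f : (∀ i, Ω i) → ℝ) (hf : Measurable f) (C : ℝ) (hC : ∀ x, |f x| ≤ C)
    (k : Fin n) (x : ∀ i, Ω i) :
    Monotone (fun β : ℝ =>
      condThermalExpK μ k β f (fun z => (f z - condInfK k f z) ^ 2) x) := by
  set F : Ω k → ℝ := fun y => f (Function.update x k y)
  have hF : Measurable F := hf.comp (measurable_update x)
  set m := condInfK k f x
  have hm (y : Ω k) : m ≤ F y :=
    ciInf_le ⟨-C, by rintro _ ⟨y', rfl⟩; exact neg_le_of_abs_le (hC _)⟩ y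
  have hFm (y : Ω k) : F y - m ≤ C - m := by linarith [le_of_abs_le (hC (Function.update x k y))]
  have hg : Integrable (fun y => (F y - m) ^ 2) (μ k) :=
    .of_bound (by fun_prop) ((C - m) ^ 2) <| .of_forall fun y => by
      rw [norm_of_nonneg (sq_nonneg _)]
      exact pow_le_pow_left₀ (sub_nonneg.2 (hm y)) (hFm y) 2
  simp only [condThermalExpK_eq_thermalExp, condInfK_update]
  exact monotone_thermalExp_of_le_of_le hF (fun y => hC _) hg fun y y' h =>
    pow_le_pow_left₀ (sub_nonneg.2 (hm y)) (by linarith) 2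

end Statements
end
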